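/- arXiv:1309.1237 — 5 statements merged into one kernel-verified Lean document; each statement's English description precedes it below -/
import Mathlib

section
/- Let q be an integer. For positive integers i and j, gcd((q-1)^(i+j-3)·(q^gcd(i-1,j)-1)·(q^j-1), (q-1)^(i+j-3)·(q^gcd(i,j-1)-1)·(q^i-1)) = (q-1)^(i+j-2)·(q^gcd(i,j)-1), up to sign (i.e., the two sides generate the same ideal in ℤ). -/
private lemma igcd_add_mul (a b c : ℤ) : Int.gcd a (b + c * a) = Int.gcd a b := by
  apply Nat.dvd_antisymm
  · refine Int.natCast_dvd_natCast.mp (Int.dvd_coe_gcd (Int.gcd_dvd_left _ _) ?_)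
    have h1 : (Int.gcd a (b + c * a) : ℤ) ∣ b + c * a := Int.gcd_dvd_right _ _
    have h2 : (Int.gcd a (b + c * a) : ℤ) ∣ c * a := (Int.gcd_dvd_left _ _).mul_left c
    simpa using dvd_sub h1 h2
  · refine Int.natCast_dvd_natCast.mp (Int.dvd_coe_gcd (Int.gcd_dvd_left _ _) ?_)
    exact dvd_add (Int.gcd_dvd_right _ _) ((Int.gcd_dvd_left _ _).mul_left c)

private lemma gcd_pow_sub_one_aux (q : ℤ) :
    ∀ (k m n : ℕ), m + n ≤ k →
      Int.gcd (q ^ m - 1) (q ^ n - 1) = (q ^ (Nat.gcd m n) - 1).natAbs := by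
  intro k
  induction k with
  | zero =>
    intro m n h
    have hm : m = 0 := by omega
    have hn : n = 0 := by omega
    subst hm; subst hn; simp
  | succ k ih =>
    intro m n h
    rcases Nat.eq_zero_or_pos m with hm | hm
    · subst hm; simp [Int.gcd]
    rcases Nat.eq_zero_or_pos n with hn | hn
    · subst hn; simp [Int.gcd]
    rcases le_or_gt m n with hmn | hmn
    · have key : q ^ n - 1 = (q ^ (n - m) - 1) + q ^ (n - m) * (q ^ m - 1) := by
        have : q ^ (n - m) * q ^ m = q ^ n := by
          rw [← pow_add, Nat.sub_add_cancel hmn]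
        ring_nf
        linear_combination -this
      rw [key, igcd_add_mul, ih m (n - m) (by omega), Nat.gcd_sub_self_right hmn]
    · have hnm : n ≤ m := le_of_lt hmn
      have key : q ^ m - 1 = (q ^ (m - n) - 1) + q ^ (m - n) * (q ^ n - 1) := by
        have : q ^ (m - n) * q ^ n = q ^ m := by
          rw [← pow_add, Nat.sub_add_cancel hnm]
        ring_nf
        linear_combination -this
      rw [Int.gcd_comm, key, igcd_add_mul, ih n (m - n) (by omega),
        Nat.gcd_sub_self_right hnm, Nat.gcd_comm]

private lemma gcdQ (q : ℤ) (m n : ℕ) :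
    Int.gcd (q ^ m - 1) (q ^ n - 1) = (q ^ (Nat.gcd m n) - 1).natAbs :=
  gcd_pow_sub_one_aux q (m + n) m n le_rfl

private lemma dvdQ (q : ℤ) {m n : ℕ} (h : m ∣ n) : q ^ m - 1 ∣ q ^ n - 1 := by
  obtain ⟨c, rfl⟩ := h
  have := sub_dvd_pow_sub_pow (q ^ m) 1 c
  simpa [← pow_mul] using this

/-- The key gcd recursion for the q-polynomial algebra, up to sign. -/
theorem stmt_0 (q : ℤ) (i j : ℕ) (hi : 2 ≤ i) (hj : 2 ≤ j) :
    Int.gcd ((q - 1) ^ (i + j - 3) * (q ^ (Nat.gcd (i - 1) j) - 1) * (q ^ j - 1))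
        ((q - 1) ^ (i + j - 3) * (q ^ (Nat.gcd i (j - 1)) - 1) * (q ^ i - 1)) =
      ((q - 1) ^ (i + j - 2) * (q ^ (Nat.gcd i j) - 1)).natAbs := by
  obtain rfl | hq1 := eq_or_ne q 1
  · simp
  set a := Nat.gcd (i - 1) j with ha
  set b := Nat.gcd i (j - 1) with hb
  set g := Nat.gcd i j with hg
  have ha0 : a ≠ 0 := Nat.gcd_ne_zero_right (by omega)
  have hb0 : b ≠ 0 := Nat.gcd_ne_zero_left (by omega)
  have hg0 : g ≠ 0 := Nat.gcd_ne_zero_left (by omega)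
  have hi0 : i ≠ 0 := by omega
  have hj0 : j ≠ 0 := by omega
  -- coprimality facts
  have ci : Nat.Coprime (i - 1) i := by
    rw [Nat.Coprime, Nat.gcd_self_sub_left (by omega : 1 ≤ i), Nat.gcd_one_left]
  have cj : Nat.Coprime (j - 1) j := by
    rw [Nat.Coprime, Nat.gcd_self_sub_left (by omega : 1 ≤ j), Nat.gcd_one_left]
  have cai : Nat.Coprime a i :=
    Nat.Coprime.coprime_dvd_left (Nat.gcd_dvd_left _ _) ci
  have cbj : Nat.Coprime b j :=
    Nat.Coprime.coprime_dvd_left (Nat.gcd_dvd_right _ _) cj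
  have cab : Nat.Coprime a b :=
    Nat.Coprime.coprime_dvd_right (Nat.gcd_dvd_left i (j - 1)) cai
  -- easy divisibility direction
  set A : ℤ := (q - 1) ^ (i + j - 3) * (q ^ a - 1) * (q ^ j - 1) with hA
  set B : ℤ := (q - 1) ^ (i + j - 3) * (q ^ b - 1) * (q ^ i - 1) with hB
  set R : ℤ := (q - 1) ^ (i + j - 2) * (q ^ g - 1) with hR
  have hexp : i + j - 2 = (i + j - 3) + 1 := by omega
  have hdR1 : R ∣ A := by
    rw [hR, hA, hexp, pow_succ, mul_assoc, mul_assoc]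
    refine mul_dvd_mul_left _ (mul_dvd_mul ?_ ?_)
    · simpa using dvdQ q (one_dvd a)
    · exact dvdQ q (Nat.gcd_dvd_right i j)
  have hdR2 : R ∣ B := by
    rw [hR, hB, hexp, pow_succ, mul_assoc, mul_assoc]
    refine mul_dvd_mul_left _ (mul_dvd_mul ?_ ?_)
    · simpa using dvdQ q (one_dvd b)
    · exact dvdQ q (Nat.gcd_dvd_left i j)
  have hRG : R.natAbs ∣ Int.gcd A B := by
    have := Int.natAbs_dvd_natAbs.mpr (Int.dvd_coe_gcd hdR1 hdR2)
    simpa using this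
  refine Nat.dvd_antisymm ?_ hRG
  obtain rfl | hqm1 := eq_or_ne q (-1)
  · -- q = -1
    by_cases hge : 2 ∣ g
    · have : ((-1 : ℤ)) ^ g = 1 := Even.neg_one_pow (even_iff_two_dvd.mpr hge)
      have hR0 : R = 0 := by rw [hR, this]; ring
      rw [hR0]; simp
    · have hgodd : Odd g := Nat.odd_iff.mpr (Nat.two_dvd_ne_zero.mp hge)
      have hnotboth : ¬ (2 ∣ i ∧ 2 ∣ j) := by
        rintro ⟨h1, h2⟩; exact hge (Nat.dvd_gcd h1 h2)
      by_cases hie : 2 ∣ i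
      · have hjodd : Odd j := by
          rcases Nat.even_or_odd j with he | ho
          · exact absurd ⟨hie, he.two_dvd⟩ hnotboth
          · exact ho
        have hbe : 2 ∣ b := Nat.dvd_gcd hie (by omega)
        have haodd : Odd a := by
          have hd : a ∣ i - 1 := Nat.gcd_dvd_left _ _
          have : Odd (i - 1) := by
            obtain ⟨c, hc⟩ := hie; exact ⟨c - 1, by omega⟩
          exact this.of_dvd_nat hd
        have hB0 : B = 0 := by
          have : ((-1 : ℤ)) ^ b = 1 := Even.neg_one_pow (even_iff_two_dvd.mpr hbe)
          rw [hB, this]; ring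
        have hAeq : A = R := by
          rw [hA, hR, haodd.neg_one_pow, hjodd.neg_one_pow, hgodd.neg_one_pow, hexp, pow_succ]
          try ring
        rw [hB0, hAeq]
        simp [Int.gcd]
      · have hiodd : Odd i := Nat.odd_iff.mpr (Nat.two_dvd_ne_zero.mp hie)
        have hbodd : Odd b := hiodd.of_dvd_nat (Nat.gcd_dvd_left _ _)
        have hBeq : B = R := by
          rw [hB, hR, hbodd.neg_one_pow, hiodd.neg_one_pow, hgodd.neg_one_pow, hexp, pow_succ]
          try ring
        by_cases hje : 2 ∣ j
        · have hA0 : A = 0 := by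
            have : ((-1 : ℤ)) ^ j = 1 := Even.neg_one_pow (even_iff_two_dvd.mpr hje)
            rw [hA, this]; ring
          rw [hA0, hBeq]
          simp [Int.gcd]
        · have hjodd : Odd j := Nat.odd_iff.mpr (Nat.two_dvd_ne_zero.mp hje)
          have haodd : Odd a := hjodd.of_dvd_nat (Nat.gcd_dvd_right _ _)
          have hAeq : A = R := by
            rw [hA, hR, haodd.neg_one_pow, hjodd.neg_one_pow, hgodd.neg_one_pow, hexp, pow_succ]
            try ring
          rw [hAeq, hBeq]
          simp [Int.gcd]
  · -- main case : q ≠ 1, q ≠ -1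
    have hne : ∀ m : ℕ, m ≠ 0 → q ^ m - 1 ≠ 0 := by
      intro m hm h
      have h1 : q ^ m = 1 := by linarith [sub_eq_zero.mp h]
      have hdvd : q ∣ 1 := h1 ▸ dvd_pow_self q hm
      rcases Int.isUnit_iff.mp (isUnit_of_dvd_one hdvd) with h' | h'
      · exact hq1 h'
      · exact hqm1 h'
    have hq0 : q - 1 ≠ 0 := sub_ne_zero.mpr hq1
    have hAne : A ≠ 0 :=
      mul_ne_zero (mul_ne_zero (pow_ne_zero _ hq0) (hne a ha0)) (hne j hj0)
    have hBne : B ≠ 0 :=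
      mul_ne_zero (mul_ne_zero (pow_ne_zero _ hq0) (hne b hb0)) (hne i hi0)
    have hRne : R ≠ 0 := mul_ne_zero (pow_ne_zero _ hq0) (hne g hg0)
    have hGne : Int.gcd A B ≠ 0 := by
      simp [Int.gcd_eq_zero_iff, hAne, hBne]
    rw [← Nat.factorization_le_iff_dvd hGne (Int.natAbs_ne_zero.mpr hRne)]
    rw [Finsupp.le_def]
    intro p
    set F : ℕ → ℕ := fun m => ((q ^ m - 1).natAbs).factorization p with hF
    have hF1 : ((q - 1).natAbs).factorization p = F 1 := by
      simp [hF]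
    have Fmin : ∀ m n : ℕ, m ≠ 0 → n ≠ 0 →
        min (F m) (F n) = F (Nat.gcd m n) := by
      intro m n hm hn
      have h := gcdQ q m n
      have h2 : Nat.gcd (q ^ m - 1).natAbs (q ^ n - 1).natAbs
          = (q ^ (Nat.gcd m n) - 1).natAbs := h
      have h3 : (Nat.gcd (q ^ m - 1).natAbs (q ^ n - 1).natAbs).factorization p
          = ((q ^ (Nat.gcd m n) - 1).natAbs).factorization p := by rw [h2]
      rw [Nat.factorization_gcd (Int.natAbs_ne_zero.mpr (hne m hm))
        (Int.natAbs_ne_zero.mpr (hne n hn))] at h3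
      simpa [hF, Finsupp.inf_apply] using h3
    have vA : (A.natAbs).factorization p = (i + j - 3) * F 1 + F a + F j := by
      rw [hA, Int.natAbs_mul, Int.natAbs_mul, Int.natAbs_pow,
        Nat.factorization_mul (mul_ne_zero (pow_ne_zero _ (Int.natAbs_ne_zero.mpr hq0))
          (Int.natAbs_ne_zero.mpr (hne a ha0))) (Int.natAbs_ne_zero.mpr (hne j hj0)),
        Nat.factorization_mul (pow_ne_zero _ (Int.natAbs_ne_zero.mpr hq0))
          (Int.natAbs_ne_zero.mpr (hne a ha0)),
        Nat.factorization_pow]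
      simp only [Finsupp.coe_add, Pi.add_apply, Finsupp.smul_apply, smul_eq_mul, hF1]
      try rfl
    have vB : (B.natAbs).factorization p = (i + j - 3) * F 1 + F b + F i := by
      rw [hB, Int.natAbs_mul, Int.natAbs_mul, Int.natAbs_pow,
        Nat.factorization_mul (mul_ne_zero (pow_ne_zero _ (Int.natAbs_ne_zero.mpr hq0))
          (Int.natAbs_ne_zero.mpr (hne b hb0))) (Int.natAbs_ne_zero.mpr (hne i hi0)),
        Nat.factorization_mul (pow_ne_zero _ (Int.natAbs_ne_zero.mpr hq0))
          (Int.natAbs_ne_zero.mpr (hne b hb0)),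
        Nat.factorization_pow]
      simp only [Finsupp.coe_add, Pi.add_apply, Finsupp.smul_apply, smul_eq_mul, hF1]
      try rfl
    have vR : (R.natAbs).factorization p = (i + j - 3) * F 1 + F 1 + F g := by
      rw [hR, Int.natAbs_mul, Int.natAbs_pow,
        Nat.factorization_mul (pow_ne_zero _ (Int.natAbs_ne_zero.mpr hq0))
          (Int.natAbs_ne_zero.mpr (hne g hg0)),
        Nat.factorization_pow, hexp]
      simp only [Finsupp.coe_add, Pi.add_apply, Finsupp.smul_apply, smul_eq_mul, hF1,
        add_mul, one_mul]
      try rfl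
    have vG : ((Int.gcd A B).factorization) p
        = min ((A.natAbs).factorization p) ((B.natAbs).factorization p) := by
      rw [Int.gcd_def, Nat.factorization_gcd (Int.natAbs_ne_zero.mpr hAne)
        (Int.natAbs_ne_zero.mpr hBne)]
      simp [Finsupp.inf_apply]
    have m1 : min (F a) (F b) = F 1 := by
      have := Fmin a b ha0 hb0; rwa [cab] at this
    have m2 : min (F a) (F i) = F 1 := by
      have := Fmin a i ha0 hi0; rwa [cai] at this
    have m3 : min (F b) (F j) = F 1 := by
      have := Fmin b j hb0 hj0; rwa [cbj] at this
    have m4 : min (F i) (F j) = F g := by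
      have := Fmin i j hi0 hj0; rwa [← hg] at this
    rw [vG, vA, vB, vR]
    set T := (i + j - 3) * F 1 with hT
    omega
end

section
/- Let A = ℚ⟨x,y⟩/(x^m + y^m) for an integer m ≥ 2, and let u denote the class of [x,y] in A/M₃(A), where M₃(A) is the two-sided ideal generated by L₃(A). Then in A/M₃(A): u² = 0, [u,x] = 0, [u,y] = 0, x^{m-1}u = 0, and y^{m-1}u = 0. -/
open FreeAlgebra

/-- The defining relation `x^m + y^m = 0` of `A = ℚ⟨x,y⟩/(x^m + y^m)`. -/
def fRel (m : ℕ) : FreeAlgebra ℚ (Fin 2) → FreeAlgebra ℚ (Fin 2) → Prop :=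
  fun a b => a = ι ℚ (0 : Fin 2) ^ m + ι ℚ (1 : Fin 2) ^ m ∧ b = 0

/-- The algebra `A = ℚ⟨x,y⟩/(x^m + y^m)`. -/
def Am (m : ℕ) : Type := RingQuot (fRel m)

noncomputable instance (m : ℕ) : Ring (Am m) :=
  inferInstanceAs (Ring (RingQuot (fRel m)))

noncomputable instance (m : ℕ) : Algebra ℚ (Am m) :=
  inferInstanceAs (Algebra ℚ (RingQuot (fRel m)))

/-- The lower central series `L_k(A)` (`lcs m k` is `L_k` for `k ≥ 1`). -/
noncomputable def lcs (m : ℕ) : ℕ → Submodule ℚ (Am m)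
  | 0 => ⊤
  | 1 => ⊤
  | (k + 2) =>
      Submodule.span ℚ {x | ∃ a l, l ∈ lcs m (k + 1) ∧ x = a * l - l * a}

/-- The relation whose induced congruence quotients `A` by the two-sided
ideal `M₃(A)` generated by `L₃(A)`. -/
def m3Rel (m : ℕ) : Am m → Am m → Prop := fun a b => a ∈ lcs m 3 ∧ b = 0

/-- The quotient `A/M₃(A)`. -/
def AmodM3 (m : ℕ) : Type := RingQuot (m3Rel m)

noncomputable instance (m : ℕ) : Ring (AmodM3 m) :=
  inferInstanceAs (Ring (RingQuot (m3Rel m)))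

noncomputable instance (m : ℕ) : Algebra ℚ (AmodM3 m) :=
  inferInstanceAs (Algebra ℚ (RingQuot (m3Rel m)))

/-- The class of `x` in `A/M₃(A)`. -/
noncomputable def xC (m : ℕ) : AmodM3 m :=
  RingQuot.mkAlgHom ℚ (m3Rel m)
    (RingQuot.mkAlgHom ℚ (fRel m) (ι ℚ (0 : Fin 2)))

/-- The class of `y` in `A/M₃(A)`. -/
noncomputable def yC (m : ℕ) : AmodM3 m :=
  RingQuot.mkAlgHom ℚ (m3Rel m)
    (RingQuot.mkAlgHom ℚ (fRel m) (ι ℚ (1 : Fin 2)))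

/-- The class `u` of `[x,y]` in `A/M₃(A)`. -/
noncomputable def uC (m : ℕ) : AmodM3 m := xC m * yC m - yC m * xC m

-- auxiliary definitions and lemmas
noncomputable def Qh (m : ℕ) : Am m →ₐ[ℚ] AmodM3 m := RingQuot.mkAlgHom ℚ (m3Rel m)

lemma Qh_surj (m : ℕ) : Function.Surjective (Qh m) :=
  RingQuot.mkAlgHom_surjective ℚ (m3Rel m)

lemma cen_aux (m : ℕ) (a b : Am m) (z : AmodM3 m) :
    z * (Qh m a * Qh m b - Qh m b * Qh m a)
      = (Qh m a * Qh m b - Qh m b * Qh m a) * z := by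
  obtain ⟨c, rfl⟩ := Qh_surj m z
  have h2 : a*b - b*a ∈ lcs m 2 :=
    Submodule.subset_span ⟨a, b, Submodule.mem_top, rfl⟩
  have hmem : c * (a*b - b*a) - (a*b - b*a) * c ∈ lcs m 3 :=
    Submodule.subset_span ⟨c, a*b - b*a, h2, rfl⟩
  have h0 : Qh m (c * (a*b - b*a) - (a*b - b*a) * c) = 0 := by
    have := RingQuot.mkAlgHom_rel ℚ (show m3Rel m (c * (a*b - b*a) - (a*b - b*a) * c) 0
      from ⟨hmem, rfl⟩)
    rw [map_zero] at this; exact this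
  simp only [map_sub, map_mul] at h0
  exact sub_eq_zero.mp h0

lemma sq_zero_aux {R : Type*} [Ring R] (x y : R)
    (h1 : x * (x*y - y*x) = (x*y - y*x) * x)
    (h2 : y * (x*y - y*x) = (x*y - y*x) * y)
    (h3 : y * (x*(x*y) - (x*y)*x) = (x*(x*y) - (x*y)*x) * y) :
    (x*y - y*x)^2 = 0 := by
  have key : (x*y - y*x)^2 =
      ((x*y - y*x)*x - x*(x*y - y*x))*y - y*((x*y - y*x)*x - x*(x*y - y*x))
      - ((x*y - y*x)*y - y*(x*y - y*x))*x
      + ((x*(x*y) - (x*y)*x)*y - y*(x*(x*y) - (x*y)*x)) := by noncomm_ring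
  rw [key, h1, h2, h3]
  simp

lemma pow_comm_aux {R : Type*} [Ring R] [Algebra ℚ R] (a b : R)
    (h : (a*b - b*a) * a = a * (a*b - b*a)) :
    ∀ k : ℕ, a^(k+1)*b - b*a^(k+1) = ((k : ℚ)+1) • (a^k * (a*b - b*a)) := by
  intro k
  induction k with
  | zero => simp
  | succ k ih =>
    have hc : (a*b - b*a) * a^(k+1) = a^(k+1) * (a*b - b*a) :=
      (Commute.pow_right h (k+1))
    calc a^(k+1+1)*b - b*a^(k+1+1)
        = a*(a^(k+1)*b - b*a^(k+1)) + (a*b - b*a)*a^(k+1) := by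
          rw [pow_succ' a (k+1)]; noncomm_ring
      _ = a*(((k : ℚ)+1) • (a^k * (a*b - b*a))) + (a*b - b*a)*a^(k+1) := by rw [ih]
      _ = ((k : ℚ)+1) • (a^(k+1) * (a*b - b*a)) + a^(k+1)*(a*b-b*a) := by
          rw [mul_smul_comm, ← mul_assoc, ← pow_succ', hc]
      _ = (((k+1 : ℕ) : ℚ)+1) • (a^(k+1) * (a*b - b*a)) := by
          push_cast
          module


/-- In `A/M₃(A)` for `A = ℚ⟨x,y⟩/(x^m + y^m)`:
`u² = [u,x] = [u,y] = x^{m-1}u = y^{m-1}u = 0`. -/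
theorem stmt_5 (m : ℕ) (hm : 2 ≤ m) :
    uC m ^ 2 = 0 ∧
    uC m * xC m - xC m * uC m = 0 ∧
    uC m * yC m - yC m * uC m = 0 ∧
    xC m ^ (m - 1) * uC m = 0 ∧
    yC m ^ (m - 1) * uC m = 0 := by
  set q := RingQuot.mkAlgHom ℚ (fRel m) with hq
  have hu : ∀ z : AmodM3 m, z * uC m = uC m * z := fun z =>
    cen_aux m (q (ι ℚ (0 : Fin 2))) (q (ι ℚ (1 : Fin 2))) z
  have hu' : ∀ z : AmodM3 m, z * (yC m * xC m - xC m * yC m)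
      = (yC m * xC m - xC m * yC m) * z := fun z =>
    cen_aux m (q (ι ℚ (1 : Fin 2))) (q (ι ℚ (0 : Fin 2))) z
  have h3 : yC m * (xC m*(xC m*yC m) - (xC m*yC m)*xC m)
      = (xC m*(xC m*yC m) - (xC m*yC m)*xC m) * yC m := by
    have := cen_aux m (q (ι ℚ (0 : Fin 2))) ((show Am m from q (ι ℚ (0 : Fin 2))) * (show Am m from q (ι ℚ (1 : Fin 2)))) (yC m)
    rw [map_mul] at this
    exact this
  have hsq : uC m ^ 2 = 0 :=
    sq_zero_aux (xC m) (yC m) (hu (xC m)) (hu (yC m)) h3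
  have hrel : xC m ^ m + yC m ^ m = 0 := by
    have h1 : q (ι ℚ (0:Fin 2) ^ m + ι ℚ (1:Fin 2) ^ m) = 0 := by
      have := RingQuot.mkAlgHom_rel ℚ (show fRel m (ι ℚ (0:Fin 2) ^ m + ι ℚ (1:Fin 2) ^ m) 0
        from ⟨rfl, rfl⟩)
      simpa [hq] using this
    have h2 := congrArg (Qh m) h1
    rw [map_add q, map_pow q, map_pow q] at h2
    change Qh m ((show Am m from q (ι ℚ 0)) ^ m + (show Am m from q (ι ℚ 1)) ^ m) = Qh m 0 at h2
    rw [map_add (Qh m), map_pow (Qh m), map_pow (Qh m), map_zero] at h2; exact h2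
  refine ⟨hsq, sub_eq_zero.mpr (hu (xC m)).symm, sub_eq_zero.mpr (hu (yC m)).symm, ?_, ?_⟩
  · obtain ⟨n, rfl⟩ : ∃ n, m = n + 1 := ⟨m - 1, (Nat.succ_pred_eq_of_pos (by omega)).symm⟩
    have hXn : xC (n+1) ^ (n+1) = -(yC (n+1) ^ (n+1)) := eq_neg_of_add_eq_zero_left hrel
    have hx0 : xC (n+1)^(n+1) * yC (n+1) - yC (n+1) * xC (n+1)^(n+1) = 0 := by
      rw [hXn, neg_mul, mul_neg, sub_neg_eq_add, ← pow_succ, ← pow_succ']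
      exact neg_add_cancel _
    have hpx := pow_comm_aux (xC (n+1)) (yC (n+1)) (hu (xC (n+1))).symm n
    rw [hx0] at hpx
    have hne : ((n : ℚ) + 1) ≠ 0 := by positivity
    have := congrArg (fun t => ((n : ℚ)+1)⁻¹ • t) hpx
    simp only [smul_zero, smul_smul, inv_mul_cancel₀ hne, one_smul] at this
    simpa [Nat.add_sub_cancel, uC] using this.symm
  · obtain ⟨n, rfl⟩ : ∃ n, m = n + 1 := ⟨m - 1, (Nat.succ_pred_eq_of_pos (by omega)).symm⟩
    have hYn : yC (n+1) ^ (n+1) = -(xC (n+1) ^ (n+1)) := eq_neg_of_add_eq_zero_right hrel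
    have hy0 : yC (n+1)^(n+1) * xC (n+1) - xC (n+1) * yC (n+1)^(n+1) = 0 := by
      rw [hYn, neg_mul, mul_neg, sub_neg_eq_add, ← pow_succ, ← pow_succ']
      exact neg_add_cancel _
    have hpy := pow_comm_aux (yC (n+1)) (xC (n+1)) (hu' (yC (n+1))).symm n
    rw [hy0] at hpy
    have hne : ((n : ℚ) + 1) ≠ 0 := by positivity
    have := congrArg (fun t => ((n : ℚ)+1)⁻¹ • t) hpy
    simp only [smul_zero, smul_smul, inv_mul_cancel₀ hne, one_smul] at this
    have h4 : yC (n+1)^n * (yC (n+1) * xC (n+1) - xC (n+1) * yC (n+1)) = 0 := this.symm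
    have h5 : uC (n+1) = -(yC (n+1) * xC (n+1) - xC (n+1) * yC (n+1)) := by
      rw [uC]; exact (neg_sub _ _).symm
    rw [Nat.add_sub_cancel, h5, mul_neg, h4, neg_zero]
end

section
/- Let A = ℚ⟨x,y⟩/(x^m + y^m), m ≥ 2. The elements x^i y^j u for 0 ≤ i, j ≤ m-2, where u = [x,y], form a ℚ-basis of N₂(A) = M₂(A)/M₃(A). Consequently, dim_ℚ N₂(A)[d] = d-1 for 2 ≤ d < m, 2m-d-1 for m ≤ d ≤ 2m-2, and 0 otherwise, where the grading assigns x and y degree 1. -/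
open FreeAlgebra

/-- The generator `x` of `A`. -/
noncomputable def XA (m : ℕ) : Am m :=
  RingQuot.mkAlgHom ℚ (fRel m) (ι ℚ (0 : Fin 2))

/-- The generator `y` of `A`. -/
noncomputable def YA (m : ℕ) : Am m :=
  RingQuot.mkAlgHom ℚ (fRel m) (ι ℚ (1 : Fin 2))

/-- The two-sided ideal `M_k(A)` generated by `L_k(A)`, as a ℚ-submodule. -/
noncomputable def Mid (m k : ℕ) : Submodule ℚ (Am m) :=
  Submodule.span ℚ {x | ∃ a l b, l ∈ lcs m k ∧ x = a * l * b}

/-- `N₂(A) = M₂(A)/M₃(A)`, realized as the image of `M₂(A)` in the quotient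
module `A/M₃(A)`. -/
noncomputable def N2 (m : ℕ) : Submodule ℚ (Am m ⧸ Mid m 3) :=
  Submodule.map (Mid m 3).mkQ (Mid m 2)

/-- The span of the words of length `d` in `ℚ⟨x,y⟩`: the degree-`d` component
for the grading with `deg x = deg y = 1`. -/
noncomputable def freeDeg (d : ℕ) : Submodule ℚ (FreeAlgebra ℚ (Fin 2)) :=
  Submodule.span ℚ
    {x | ∃ w : List (Fin 2), w.length = d ∧ x = (w.map (ι ℚ)).prod}

/-- The degree-`d` component of `A/M₃(A)`. -/
noncomputable def qDeg (m d : ℕ) : Submodule ℚ (Am m ⧸ Mid m 3) :=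
  Submodule.map (Mid m 3).mkQ
    (Submodule.map (RingQuot.mkAlgHom ℚ (fRel m)).toLinearMap (freeDeg d))


noncomputable section Aux

open Submodule

variable (m : ℕ)

local notation "A" => Am m
local notation "π" => RingQuot.mkAlgHom ℚ (fRel m)

/-- letter in A -/
def letterA (z : Fin 2) : Am m := RingQuot.mkAlgHom ℚ (fRel m) (ι ℚ z)

/-- word in A -/
def pw (w : List (Fin 2)) : Am m := RingQuot.mkAlgHom ℚ (fRel m) ((w.map (ι ℚ)).prod)

lemma pw_nil : pw m [] = 1 := by
  unfold pw
  rw [List.map_nil, List.prod_nil, map_one]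
  rfl

lemma pw_cons (z : Fin 2) (w : List (Fin 2)) :
    pw m (z :: w) = letterA m z * pw m w := by
  unfold pw letterA
  rw [List.map_cons, List.prod_cons, map_mul]
  rfl

lemma span_words : Submodule.span ℚ (Set.range (pw m)) = ⊤ := by
  have hfree : ∀ a : FreeAlgebra ℚ (Fin 2),
      a ∈ Submodule.span ℚ (Set.range (fun w : List (Fin 2) => (w.map (ι ℚ)).prod)) := by
    intro a
    induction a using FreeAlgebra.induction with
    | grade0 r =>
        have : (algebraMap ℚ (FreeAlgebra ℚ (Fin 2)) r) = r • (([] : List (Fin 2)).map (ι ℚ)).prod := by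
          simp [Algebra.algebraMap_eq_smul_one]
        rw [this]
        exact smul_mem _ _ (subset_span ⟨[], rfl⟩)
    | grade1 i =>
        exact subset_span ⟨[i], by simp⟩
    | mul a b ha hb =>
        have h2 : a * b ∈ Submodule.span ℚ (Set.range (fun w : List (Fin 2) => (w.map (ι ℚ)).prod)) *
            Submodule.span ℚ (Set.range (fun w : List (Fin 2) => (w.map (ι ℚ)).prod)) :=
          Submodule.mul_mem_mul ha hb
        rw [Submodule.span_mul_span] at h2
        refine Submodule.span_le.2 ?_ h2
        rintro x ⟨u, ⟨wu, rfl⟩, v, ⟨wv, rfl⟩, rfl⟩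
        exact subset_span ⟨wu ++ wv, by simp⟩
    | add a b ha hb => exact add_mem ha hb
  apply Submodule.eq_top_iff'.2
  intro a
  obtain ⟨f, rfl⟩ := RingQuot.mkAlgHom_surjective ℚ (fRel m) a
  have := hfree f
  have hmap := Submodule.map_le_iff_le_comap.1
    (le_of_eq (Submodule.map_span (RingQuot.mkAlgHom ℚ (fRel m)).toLinearMap
      (Set.range (fun w : List (Fin 2) => (w.map (ι ℚ)).prod))))
  have h3 := hmap this
  refine Submodule.span_le.2 ?_ h3
  rintro x ⟨y, ⟨w, rfl⟩, rfl⟩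
  exact subset_span ⟨w, rfl⟩

/-- induction over the word spanning set -/
lemma word_induction {P : Am m → Prop}
    (h0 : P 0) (hadd : ∀ a b, P a → P b → P (a + b))
    (hsmul : ∀ (c : ℚ) a, P a → P (c • a))
    (hw : ∀ w : List (Fin 2), P (pw m w)) : ∀ a, P a := by
  intro a
  have ha : a ∈ Submodule.span ℚ (Set.range (pw m)) := by rw [span_words]; trivial
  induction ha using Submodule.span_induction with
  | mem x hx => obtain ⟨w, rfl⟩ := hx; exact hw w
  | zero => exact h0
  | add x y _ _ hx hy => exact hadd x y hx hy
  | smul c x _ hx => exact hsmul c x hx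

end Aux
noncomputable section Struct

open Submodule

variable (m : ℕ)

lemma mem_lcs2 (a b : Am m) : a * b - b * a ∈ lcs m 2 :=
  Submodule.subset_span ⟨a, b, trivial, rfl⟩

lemma mem_lcs3 (a : Am m) {l : Am m} (hl : l ∈ lcs m 2) : a * l - l * a ∈ lcs m 3 :=
  Submodule.subset_span ⟨a, l, hl, rfl⟩

lemma mem_Mid3 (a b : Am m) {l : Am m} (hl : l ∈ lcs m 3) : a * l * b ∈ Mid m 3 :=
  Submodule.subset_span ⟨a, l, b, hl, rfl⟩

lemma mem_Mid3' {l : Am m} (hl : l ∈ lcs m 3) : l ∈ Mid m 3 := by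
  have := mem_Mid3 m 1 1 hl
  rwa [one_mul, mul_one] at this

lemma Mid3_mul (a b : Am m) {z : Am m} (hz : z ∈ Mid m 3) : a * z * b ∈ Mid m 3 := by
  induction hz using Submodule.span_induction with
  | mem x hx =>
      obtain ⟨a', l, b', hl, rfl⟩ := hx
      have : a * (a' * l * b') * b = (a * a') * l * (b' * b) := by noncomm_ring
      rw [this]; exact mem_Mid3 m _ _ hl
  | zero => rw [mul_zero, zero_mul]; exact zero_mem _
  | add x y _ _ hx hy =>
      have : a * (x + y) * b = a * x * b + a * y * b := by noncomm_ring
      rw [this]; exact add_mem hx hy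
  | smul c x _ hx =>
      have : a * (c • x) * b = c • (a * x * b) := by
        rw [mul_smul_comm, smul_mul_assoc]
      rw [this]; exact smul_mem _ _ hx

lemma Mid3_mul_left (a : Am m) {z : Am m} (hz : z ∈ Mid m 3) : a * z ∈ Mid m 3 := by
  have := Mid3_mul m a 1 hz; rwa [mul_one] at this

lemma Mid3_mul_right (b : Am m) {z : Am m} (hz : z ∈ Mid m 3) : z * b ∈ Mid m 3 := by
  have := Mid3_mul m 1 b hz; rwa [one_mul] at this

/-- move an `L₂` element across a factor, mod `M₃` -/
lemma move_lcs2 (a b : Am m) {l : Am m} (hl : l ∈ lcs m 2) :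
    a * (l * b) - a * (b * l) ∈ Mid m 3 := by
  have h : a * (l * b) - a * (b * l) = -(a * (b * l - l * b) * 1) := by noncomm_ring
  rw [h]
  exact neg_mem (mem_Mid3 m _ _ (mem_lcs3 m b hl))

end Struct
noncomputable section KeyLemmas

open Submodule

variable (m : ℕ)

/-- the commutator u = [x,y] -/
def UA : Am m := XA m * YA m - YA m * XA m

lemma UA_mem_lcs2 : UA m ∈ lcs m 2 := mem_lcs2 m _ _

/-- `u² ∈ M₃` -/
lemma uu_mem : UA m * UA m ∈ Mid m 3 := by
  set X := XA m
  set Y := YA m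
  set l1 := Y * (X * Y) - (X * Y) * Y with hl1
  set l2 := (Y * Y) * X - X * (Y * Y) with hl2
  have hid : UA m * UA m =
      ((X * l1 - l1 * X) - (X * l2 - l2 * X)) - Y * (X * UA m - UA m * X) * 1 := by
    rw [hl1, hl2]; unfold UA; noncomm_ring
  rw [hid]
  refine sub_mem (sub_mem ?_ ?_) ?_
  · exact mem_Mid3' m (mem_lcs3 m X (mem_lcs2 m Y (X * Y)))
  · exact mem_Mid3' m (mem_lcs3 m X (mem_lcs2 m (Y * Y) X))
  · exact mem_Mid3 m Y 1 (mem_lcs3 m X (UA_mem_lcs2 m))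

/-- `[b, a^{n+1}] ≡ (n+1) a^n [b,a]` mod `M₃` -/
lemma comm_pow (a b : Am m) :
    ∀ n : ℕ, b * a ^ (n + 1) - a ^ (n + 1) * b
      - ((n + 1 : ℕ) : ℚ) • (a ^ n * (b * a - a * b)) ∈ Mid m 3 := by
  intro n
  induction n with
  | zero =>
      have h0 : b * a ^ 1 - a ^ 1 * b - ((0 + 1 : ℕ) : ℚ) • (a ^ 0 * (b * a - a * b)) = 0 := by
        simp [pow_one, pow_zero]
      rw [h0]; exact zero_mem _
  | succ n ih =>
      have hmove : a ^ n * (b * a - a * b) * a - a ^ n * (a * (b * a - a * b)) ∈ Mid m 3 := by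
        have h : a ^ n * (b * a - a * b) * a - a ^ n * (a * (b * a - a * b))
            = -(a ^ n * (a * (b * a - a * b) - (b * a - a * b) * a) * 1) := by noncomm_ring
        rw [h]
        exact neg_mem (mem_Mid3 m _ _ (mem_lcs3 m a (mem_lcs2 m b a)))
      have hid : b * a ^ (n + 1 + 1) - a ^ (n + 1 + 1) * b
          - ((n + 1 + 1 : ℕ) : ℚ) • (a ^ (n + 1) * (b * a - a * b))
          = (b * a ^ (n + 1) - a ^ (n + 1) * b
              - ((n + 1 : ℕ) : ℚ) • (a ^ n * (b * a - a * b))) * a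
            + ((n + 1 : ℕ) : ℚ) •
              (a ^ n * (b * a - a * b) * a - a ^ n * (a * (b * a - a * b))) := by
        have hp2 : a ^ (n + 1 + 1) = a ^ n * (a * a) := by
          rw [pow_succ, pow_succ]; noncomm_ring
        have hp1 : a ^ (n + 1) = a ^ n * a := by rw [pow_succ]
        rw [hp2, hp1]
        simp only [mul_sub, sub_mul, mul_add, add_mul, smul_sub, smul_add, smul_mul_assoc,
          mul_assoc]
        match_scalars <;> push_cast <;> ring
      rw [hid]
      exact add_mem (Mid3_mul_right m a ih) (smul_mem _ _ hmove)

lemma XmYm : XA m ^ m + YA m ^ m = 0 := by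
  have h := RingQuot.mkAlgHom_rel ℚ (show fRel m (ι ℚ (0 : Fin 2) ^ m + ι ℚ (1 : Fin 2) ^ m) 0
    from ⟨rfl, rfl⟩)
  rw [map_add, map_pow, map_pow, map_zero] at h
  exact h

lemma smul_cancel_mem {M : Submodule ℚ (Am m)} {v : Am m} {s : ℚ} (hs : s ≠ 0)
    (h : s • v ∈ M) : v ∈ M := by
  have := M.smul_mem s⁻¹ h
  rwa [smul_smul, inv_mul_cancel₀ hs, one_smul] at this

/-- `x^{m-1} u ∈ M₃` -/
lemma Xm1U (hm : 2 ≤ m) : XA m ^ (m - 1) * UA m ∈ Mid m 3 := by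
  set X := XA m with hX
  set Y := YA m with hY
  have h := comm_pow m X Y (m - 1)
  have hm1 : m - 1 + 1 = m := by omega
  rw [hm1] at h
  have hXm : X ^ m = -(Y ^ m) := by
    have h2 := XmYm m
    rw [← hX, ← hY] at h2
    exact eq_neg_of_add_eq_zero_left h2
  rw [hXm] at h
  have h3 : Y * -(Y ^ m) - -(Y ^ m) * Y = 0 := by
    have : Y * Y ^ m = Y ^ m * Y := by
      rw [← pow_succ, ← pow_succ']
    rw [mul_neg, neg_mul, this]; exact sub_self _
  rw [h3, zero_sub] at h
  have h4 : X ^ (m - 1) * (Y * X - X * Y) ∈ Mid m 3 := by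
    refine smul_cancel_mem m (s := (m : ℚ)) ?_ ?_
    · exact_mod_cast Nat.cast_ne_zero.2 (by omega)
    · have := neg_mem h
      rwa [neg_neg] at this
  have h5 : X ^ (m - 1) * UA m = -(X ^ (m - 1) * (Y * X - X * Y)) := by
    unfold UA; rw [← hX, ← hY]; noncomm_ring
  rw [h5]; exact neg_mem h4

/-- `y^{m-1} u ∈ M₃` -/
lemma Ym1U (hm : 2 ≤ m) : YA m ^ (m - 1) * UA m ∈ Mid m 3 := by
  set X := XA m with hX
  set Y := YA m with hY
  have h := comm_pow m Y X (m - 1)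
  have hm1 : m - 1 + 1 = m := by omega
  rw [hm1] at h
  have hYm : Y ^ m = -(X ^ m) := by
    have h2 := XmYm m
    rw [← hX, ← hY] at h2
    exact eq_neg_of_add_eq_zero_right h2
  rw [hYm] at h
  have h3 : X * -(X ^ m) - -(X ^ m) * X = 0 := by
    have : X * X ^ m = X ^ m * X := by
      rw [← pow_succ, ← pow_succ']
    rw [mul_neg, neg_mul, this]; exact sub_self _
  rw [h3, zero_sub] at h
  have h4 : Y ^ (m - 1) * (X * Y - Y * X) ∈ Mid m 3 := by
    refine smul_cancel_mem m (s := (m : ℚ)) ?_ ?_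
    · exact_mod_cast Nat.cast_ne_zero.2 (by omega)
    · have := neg_mem h
      rwa [neg_neg] at this
  have h5 : Y ^ (m - 1) * UA m = Y ^ (m - 1) * (X * Y - Y * X) := by
    unfold UA; rw [← hX, ← hY]
  rw [h5]; exact h4

end KeyLemmas
noncomputable section Spanning

open Submodule

variable (m : ℕ)

lemma fin2_cases (z : Fin 2) : z = 0 ∨ z = 1 := by omega

lemma letterA_zero : letterA m 0 = XA m := rfl
lemma letterA_one : letterA m 1 = YA m := rfl

/-- the basic monomials `x^i y^j u` -/
def eA (i j : ℕ) : Am m := XA m ^ i * YA m ^ j * UA m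

/-- `d · [ζ_z, ζ_{z'}] ∈ M₃ + span(e)` for letters; stated for targets that
contain `d * U`. -/
lemma letter_comm_U (z z' : Fin 2) :
    (letterA m z * letterA m z' - letterA m z' * letterA m z) * UA m ∈ Mid m 3 := by
  rcases fin2_cases z with rfl | rfl <;> rcases fin2_cases z' with rfl | rfl <;>
    simp only [letterA_zero, letterA_one, sub_self, zero_mul]
  · exact zero_mem _
  · have e : (XA m * YA m - YA m * XA m) * UA m = UA m * UA m := by unfold UA; noncomm_ring
    rw [e]; exact uu_mem m
  · have e : (YA m * XA m - XA m * YA m) * UA m = -(UA m * UA m) := by unfold UA; noncomm_ring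
    rw [e]; exact neg_mem (uu_mem m)
  · exact zero_mem _

lemma word_letter_U (z : Fin 2) :
    ∀ w : List (Fin 2), (pw m w * letterA m z - letterA m z * pw m w) * UA m ∈ Mid m 3 := by
  intro w
  induction w with
  | nil =>
      rw [pw_nil]
      have e : ((1 : Am m) * letterA m z - letterA m z * 1) * UA m = 0 := by noncomm_ring
      rw [e]; exact zero_mem _
  | cons z' t ih =>
      rw [pw_cons]
      set p := pw m t
      set ζ := letterA m z
      set ζ' := letterA m z'
      have e : (ζ' * p * ζ - ζ * (ζ' * p)) * UA m
          = ζ' * ((p * ζ - ζ * p) * UA m)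
            + (((ζ' * ζ - ζ * ζ') * (p * UA m) - (ζ' * ζ - ζ * ζ') * (UA m * p))
              + ((ζ' * ζ - ζ * ζ') * UA m) * p) := by noncomm_ring
      rw [e]
      refine add_mem (Mid3_mul_left m _ ih) (add_mem ?_ (Mid3_mul_right m _ (letter_comm_U m z' z)))
      · have := move_lcs2 m (ζ' * ζ - ζ * ζ') p (UA_mem_lcs2 m)
        have e2 : (ζ' * ζ - ζ * ζ') * (p * UA m) - (ζ' * ζ - ζ * ζ') * (UA m * p)
            = -((ζ' * ζ - ζ * ζ') * (UA m * p) - (ζ' * ζ - ζ * ζ') * (p * UA m)) := by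
          noncomm_ring
        rw [e2]; exact neg_mem this

lemma word_word_U :
    ∀ v w : List (Fin 2), (pw m w * pw m v - pw m v * pw m w) * UA m ∈ Mid m 3 := by
  intro v
  induction v with
  | nil =>
      intro w
      rw [pw_nil]
      have e : (pw m w * 1 - 1 * pw m w) * UA m = 0 := by noncomm_ring
      rw [e]; exact zero_mem _
  | cons z t ih =>
      intro w
      rw [pw_cons]
      set a := pw m w
      set q := pw m t
      set ζ := letterA m z
      have e : (a * (ζ * q) - ζ * q * a) * UA m
          = ζ * ((a * q - q * a) * UA m)
            + (((a * ζ - ζ * a) * (q * UA m) - (a * ζ - ζ * a) * (UA m * q))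
              + ((a * ζ - ζ * a) * UA m) * q) := by noncomm_ring
      rw [e]
      refine add_mem (Mid3_mul_left m _ (ih w)) (add_mem ?_ ?_)
      · have := move_lcs2 m (a * ζ - ζ * a) q (UA_mem_lcs2 m)
        have e2 : (a * ζ - ζ * a) * (q * UA m) - (a * ζ - ζ * a) * (UA m * q)
            = -((a * ζ - ζ * a) * (UA m * q) - (a * ζ - ζ * a) * (q * UA m)) := by noncomm_ring
        rw [e2]; exact neg_mem this
      · exact Mid3_mul_right m _ (word_letter_U m z w)

lemma comm_U (a b : Am m) : (a * b - b * a) * UA m ∈ Mid m 3 := by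
  have main : ∀ a, (∀ b, (a * b - b * a) * UA m ∈ Mid m 3) := by
    intro a
    induction a using word_induction with
    | h0 => intro b; have e : ((0 : Am m) * b - b * 0) * UA m = 0 := by noncomm_ring
            rw [e]; exact zero_mem _
    | hadd a a' ha ha' =>
        intro b
        have e : ((a + a') * b - b * (a + a')) * UA m
            = (a * b - b * a) * UA m + (a' * b - b * a') * UA m := by noncomm_ring
        rw [e]; exact add_mem (ha b) (ha' b)
    | hsmul c a ha =>
        intro b
        have e : ((c • a) * b - b * (c • a)) * UA m = c • ((a * b - b * a) * UA m) := by
          rw [smul_mul_assoc, mul_smul_comm, ← smul_sub, smul_mul_assoc]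
        rw [e]; exact smul_mem _ _ (ha b)
    | hw w =>
        intro b
        induction b using word_induction with
        | h0 => have e : (pw m w * 0 - 0 * pw m w) * UA m = 0 := by noncomm_ring
                rw [e]; exact zero_mem _
        | hadd b b' hb hb' =>
            have e : (pw m w * (b + b') - (b + b') * pw m w) * UA m
                = (pw m w * b - b * pw m w) * UA m + (pw m w * b' - b' * pw m w) * UA m := by
              noncomm_ring
            rw [e]; exact add_mem hb hb'
        | hsmul c b hb =>
            have e : (pw m w * (c • b) - (c • b) * pw m w) * UA m
                = c • ((pw m w * b - b * pw m w) * UA m) := by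
              rw [smul_mul_assoc, mul_smul_comm, ← smul_sub, smul_mul_assoc]
            rw [e]; exact smul_mem _ _ hb
        | hw v => exact word_word_U m v w
  exact main a b

lemma lcs2_U {l : Am m} (hl : l ∈ lcs m 2) : l * UA m ∈ Mid m 3 := by
  induction hl using Submodule.span_induction with
  | mem x hx => obtain ⟨a, b, _, rfl⟩ := hx; exact comm_U m a b
  | zero => rw [zero_mul]; exact zero_mem _
  | add x y _ _ hx hy => rw [add_mul]; exact add_mem hx hy
  | smul c x _ hx => rw [smul_mul_assoc]; exact smul_mem _ _ hx

lemma pwU_sort : ∀ w : List (Fin 2),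
    pw m w * UA m - eA m (w.count 0) (w.count 1) ∈ Mid m 3 := by
  intro w
  induction w with
  | nil =>
      have e : pw m [] * UA m - eA m ((List.nil (α := Fin 2)).count 0)
          ((List.nil (α := Fin 2)).count 1) = 0 := by
        rw [pw_nil]; simp [eA]
      rw [e]; exact zero_mem _
  | cons z t ih =>
      set i := t.count 0
      set j := t.count 1
      rw [pw_cons]
      have step1 : letterA m z * (pw m t * UA m) - letterA m z * eA m i j ∈ Mid m 3 := by
        have e : letterA m z * (pw m t * UA m) - letterA m z * eA m i j
            = letterA m z * (pw m t * UA m - eA m i j) := by noncomm_ring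
        rw [e]; exact Mid3_mul_left m _ ih
      rcases fin2_cases z with rfl | rfl
      · have hc0 : (((0 : Fin 2) :: t).count 0) = i + 1 := by simp [List.count_cons]; rfl
        have hc1 : (((0 : Fin 2) :: t).count 1) = j := by simp [List.count_cons]; rfl
        rw [hc0, hc1]
        have e : letterA m 0 * pw m t * UA m - eA m (i + 1) j
            = (letterA m 0 * (pw m t * UA m) - letterA m 0 * eA m i j) := by
          unfold eA
          rw [letterA_zero, pow_succ']
          noncomm_ring
        rw [e]; exact step1
      · have hc0 : (((1 : Fin 2) :: t).count 0) = i := by simp [List.count_cons]; rfl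
        have hc1 : (((1 : Fin 2) :: t).count 1) = j + 1 := by simp [List.count_cons]; rfl
        rw [hc0, hc1]
        -- Y * eA i j ≡ eA i (j+1)
        set X := XA m
        set Y := YA m
        have hmove : (Y * X ^ i - X ^ i * Y) * (Y ^ j * UA m) ∈ Mid m 3 := by
          have h1 : (Y * X ^ i - X ^ i * Y) * (UA m * Y ^ j)
              - (Y * X ^ i - X ^ i * Y) * (Y ^ j * UA m) ∈ Mid m 3 := by
            have e1 : (Y * X ^ i - X ^ i * Y) * (UA m * Y ^ j)
                - (Y * X ^ i - X ^ i * Y) * (Y ^ j * UA m)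
                = ((Y * X ^ i - X ^ i * Y) * (UA m * Y ^ j)
                  - (Y * X ^ i - X ^ i * Y) * (Y ^ j * UA m)) := rfl
            exact move_lcs2 m (Y * X ^ i - X ^ i * Y) (Y ^ j) (UA_mem_lcs2 m)
          have h2 : (Y * X ^ i - X ^ i * Y) * (UA m * Y ^ j) ∈ Mid m 3 := by
            have e2 : (Y * X ^ i - X ^ i * Y) * (UA m * Y ^ j)
                = ((Y * X ^ i - X ^ i * Y) * UA m) * Y ^ j := by noncomm_ring
            rw [e2]
            exact Mid3_mul_right m _ (lcs2_U m (mem_lcs2 m Y (X ^ i)))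
          have e3 : (Y * X ^ i - X ^ i * Y) * (Y ^ j * UA m)
              = (Y * X ^ i - X ^ i * Y) * (UA m * Y ^ j)
                - ((Y * X ^ i - X ^ i * Y) * (UA m * Y ^ j)
                  - (Y * X ^ i - X ^ i * Y) * (Y ^ j * UA m)) := by noncomm_ring
          rw [e3]; exact sub_mem h2 h1
        have e : letterA m 1 * pw m t * UA m - eA m i (j + 1)
            = (letterA m 1 * (pw m t * UA m) - letterA m 1 * eA m i j)
              + (Y * X ^ i - X ^ i * Y) * (Y ^ j * UA m) := by
          unfold eA
          rw [letterA_one, pow_succ']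
          noncomm_ring
        rw [e]; exact add_mem step1 hmove

lemma eA_big_i {i : ℕ} (hm : 2 ≤ m) (hi : m - 1 ≤ i) (j : ℕ) : eA m i j ∈ Mid m 3 := by
  set X := XA m
  set Y := YA m
  set b := X ^ (i - (m - 1)) * Y ^ j
  have hpow : X ^ i = X ^ (m - 1) * X ^ (i - (m - 1)) := by
    rw [← pow_add]; congr 1; omega
  have e : eA m i j = (X ^ (m - 1) * (b * UA m) - X ^ (m - 1) * (UA m * b))
      + (X ^ (m - 1) * UA m) * b := by
    unfold eA; rw [hpow]; unfold b; noncomm_ring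
  rw [e]
  refine add_mem ?_ (Mid3_mul_right m _ (Xm1U m hm))
  have := move_lcs2 m (X ^ (m - 1)) b (UA_mem_lcs2 m)
  have e2 : X ^ (m - 1) * (b * UA m) - X ^ (m - 1) * (UA m * b)
      = -(X ^ (m - 1) * (UA m * b) - X ^ (m - 1) * (b * UA m)) := by noncomm_ring
  rw [e2]; exact neg_mem this

lemma eA_big_j {j : ℕ} (hm : 2 ≤ m) (hj : m - 1 ≤ j) (i : ℕ) : eA m i j ∈ Mid m 3 := by
  set X := XA m
  set Y := YA m
  have hpow : Y ^ j = Y ^ (j - (m - 1)) * Y ^ (m - 1) := by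
    rw [← pow_add]; congr 1; omega
  have e : eA m i j = X ^ i * (Y ^ (j - (m - 1)) * (Y ^ (m - 1) * UA m)) := by
    unfold eA; rw [hpow]; noncomm_ring
  rw [e]
  exact Mid3_mul_left m _ (Mid3_mul_left m _ (Ym1U m hm))

/-- the candidate spanning submodule of `A` -/
def Espan : Submodule ℚ (Am m) :=
  Submodule.span ℚ (Set.range fun p : Fin (m - 1) × Fin (m - 1) =>
    eA m (p.1 : ℕ) (p.2 : ℕ)) ⊔ Mid m 3

lemma Mid3_le_Espan : Mid m 3 ≤ Espan m := le_sup_right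

lemma eA_mem_Espan (hm : 2 ≤ m) (i j : ℕ) : eA m i j ∈ Espan m := by
  by_cases hi : i < m - 1
  · by_cases hj : j < m - 1
    · exact Submodule.mem_sup_left
        (Submodule.subset_span ⟨(⟨i, hi⟩, ⟨j, hj⟩), rfl⟩)
    · exact Mid3_le_Espan m (eA_big_j m hm (by omega) i)
  · exact Mid3_le_Espan m (eA_big_i m hm (by omega) j)

lemma mulU_mem_Espan (hm : 2 ≤ m) (c : Am m) : c * UA m ∈ Espan m := by
  induction c using word_induction with
  | h0 => rw [zero_mul]; exact zero_mem _
  | hadd a b ha hb => rw [add_mul]; exact add_mem ha hb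
  | hsmul c a ha => rw [smul_mul_assoc]; exact smul_mem _ _ ha
  | hw w =>
      have e : pw m w * UA m
          = (pw m w * UA m - eA m (w.count 0) (w.count 1)) + eA m (w.count 0) (w.count 1) := by
        noncomm_ring
      rw [e]
      exact add_mem (Mid3_le_Espan m (pwU_sort m w)) (eA_mem_Espan m hm _ _)

lemma mul_cc_mem_Espan (hm : 2 ≤ m) (d : Am m) (z z' : Fin 2) :
    d * (letterA m z * letterA m z' - letterA m z' * letterA m z) ∈ Espan m := by
  rcases fin2_cases z with rfl | rfl <;> rcases fin2_cases z' with rfl | rfl <;>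
    simp only [letterA_zero, letterA_one, sub_self, mul_zero]
  · exact zero_mem _
  · exact mulU_mem_Espan m hm d
  · have e : d * (YA m * XA m - XA m * YA m) = -(d * UA m) := by unfold UA; noncomm_ring
    rw [e]; exact neg_mem (mulU_mem_Espan m hm d)
  · exact zero_mem _

lemma claimA (hm : 2 ≤ m) (z : Fin 2) :
    ∀ a : Am m, ∀ c : Am m, c * (a * letterA m z - letterA m z * a) ∈ Espan m := by
  intro a
  induction a using word_induction with
  | h0 => intro c
          have e : c * ((0 : Am m) * letterA m z - letterA m z * 0) = 0 := by noncomm_ring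
          rw [e]; exact zero_mem _
  | hadd a a' ha ha' =>
      intro c
      have e : c * ((a + a') * letterA m z - letterA m z * (a + a'))
          = c * (a * letterA m z - letterA m z * a)
            + c * (a' * letterA m z - letterA m z * a') := by noncomm_ring
      rw [e]; exact add_mem (ha c) (ha' c)
  | hsmul r a ha =>
      intro c
      have e : c * ((r • a) * letterA m z - letterA m z * (r • a))
          = r • (c * (a * letterA m z - letterA m z * a)) := by
        rw [smul_mul_assoc, mul_smul_comm, ← smul_sub, mul_smul_comm]
      rw [e]; exact smul_mem _ _ (ha c)
  | hw w =>
      induction w with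
      | nil =>
          intro c
          rw [pw_nil]
          have e : c * ((1 : Am m) * letterA m z - letterA m z * 1) = 0 := by noncomm_ring
          rw [e]; exact zero_mem _
      | cons z' t ih =>
          intro c
          rw [pw_cons]
          set p := pw m t
          set ζ := letterA m z
          set ζ' := letterA m z'
          have e : c * (ζ' * p * ζ - ζ * (ζ' * p))
              = (c * ζ') * (p * ζ - ζ * p)
                + ((c * ((ζ' * ζ - ζ * ζ') * p) - c * (p * (ζ' * ζ - ζ * ζ')))
                  + (c * p) * (ζ' * ζ - ζ * ζ')) := by noncomm_ring
          rw [e]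
          refine add_mem (ih (c * ζ')) (add_mem ?_ (mul_cc_mem_Espan m hm (c * p) z' z))
          exact Mid3_le_Espan m (move_lcs2 m c p (mem_lcs2 m ζ' ζ))

lemma claimB (hm : 2 ≤ m) :
    ∀ b a c : Am m, c * (a * b - b * a) ∈ Espan m := by
  intro b
  induction b using word_induction with
  | h0 => intro a c
          have e : c * (a * (0 : Am m) - 0 * a) = 0 := by noncomm_ring
          rw [e]; exact zero_mem _
  | hadd b b' hb hb' =>
      intro a c
      have e : c * (a * (b + b') - (b + b') * a)
          = c * (a * b - b * a) + c * (a * b' - b' * a) := by noncomm_ring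
      rw [e]; exact add_mem (hb a c) (hb' a c)
  | hsmul r b hb =>
      intro a c
      have e : c * (a * (r • b) - (r • b) * a)
          = r • (c * (a * b - b * a)) := by
        rw [mul_smul_comm, smul_mul_assoc, ← smul_sub, mul_smul_comm]
      rw [e]; exact smul_mem _ _ (hb a c)
  | hw w =>
      induction w with
      | nil =>
          intro a c
          rw [pw_nil]
          have e : c * (a * (1 : Am m) - 1 * a) = 0 := by noncomm_ring
          rw [e]; exact zero_mem _
      | cons z t ih =>
          intro a c
          rw [pw_cons]
          set q := pw m t
          set ζ := letterA m z
          have e : c * (a * (ζ * q) - ζ * q * a)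
              = ((c * ((a * ζ - ζ * a) * q) - c * (q * (a * ζ - ζ * a)))
                  + (c * q) * (a * ζ - ζ * a))
                + (c * ζ) * (a * q - q * a) := by noncomm_ring
          rw [e]
          refine add_mem (add_mem ?_ (claimA m hm z a (c * q))) (ih a (c * ζ))
          exact Mid3_le_Espan m (move_lcs2 m c q (mem_lcs2 m a ζ))

lemma Mid2_le_Espan (hm : 2 ≤ m) : Mid m 2 ≤ Espan m := by
  rw [Mid]
  refine Submodule.span_le.2 ?_
  rintro x ⟨a, l, b, hl, rfl⟩
  -- a * l * b = (a*(l*b) - a*(b*l)) + (a*b)*l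
  have h2 : (a * b) * l ∈ Espan m := by
    induction hl using Submodule.span_induction with
    | mem x hx => obtain ⟨a', b', _, rfl⟩ := hx; exact claimB m hm _ a' (a * b)
    | zero => rw [mul_zero]; exact zero_mem _
    | add x y _ _ hx hy => rw [mul_add]; exact add_mem hx hy
    | smul r x _ hx => rw [mul_smul_comm]; exact smul_mem _ _ hx
  have e : a * l * b = (a * (l * b) - a * (b * l)) + (a * b) * l := by noncomm_ring
  rw [e]
  exact add_mem (Mid3_le_Espan m (move_lcs2 m a b hl)) h2

end Spanning
noncomputable section Model

open MvPolynomial Submodule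

abbrev PP := MvPolynomial (Fin 2) ℚ

variable (m : ℕ)

def IS : Ideal PP := Ideal.span {X 0 ^ m, X 1 ^ m}
def IT : Ideal PP := Ideal.span {X 0 ^ (m - 1), X 1 ^ (m - 1)}

def SS := PP ⧸ IS m
def TT := PP ⧸ IT m

instance : CommRing (SS m) := inferInstanceAs (CommRing (PP ⧸ IS m))
instance : CommRing (TT m) := inferInstanceAs (CommRing (PP ⧸ IT m))
instance : Algebra ℚ (SS m) := inferInstanceAs (Algebra ℚ (PP ⧸ IS m))
instance : Algebra ℚ (TT m) := inferInstanceAs (Algebra ℚ (PP ⧸ IT m))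

def mkS : PP →ₐ[ℚ] SS m := Ideal.Quotient.mkₐ ℚ (IS m)
def mkT : PP →ₐ[ℚ] TT m := Ideal.Quotient.mkₐ ℚ (IT m)

lemma IS_le_IT : IS m ≤ IT m := by
  rw [IS, Ideal.span_le]
  rintro x (rfl | rfl)
  · rcases Nat.eq_zero_or_pos m with hm | hm
    · subst hm
      exact Ideal.subset_span (Or.inl rfl)
    · have e : (X 0 : PP) ^ m = X 0 ^ (m - 1) * X 0 := by
        rw [← pow_succ]; congr 1; omega
      rw [e]
      exact Ideal.mul_mem_right _ _ (Ideal.subset_span (Or.inl rfl))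
  · rcases Nat.eq_zero_or_pos m with hm | hm
    · subst hm
      exact Ideal.subset_span (Or.inr rfl)
    · have e : (X 1 : PP) ^ m = X 1 ^ (m - 1) * X 1 := by
        rw [← pow_succ]; congr 1; omega
      rw [e]
      exact Ideal.mul_mem_right _ _ (Ideal.subset_span (Or.inr rfl))

lemma pderiv_IS {z : Fin 2} {f : PP} (hf : f ∈ IS m) : pderiv z f ∈ IT m := by
  induction hf using Submodule.span_induction with
  | mem x hx =>
      rcases hx with rfl | rfl
      · rw [pderiv_pow]
        rcases fin2_cases z with rfl | rfl
        · rw [pderiv_X_self, mul_one]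
          exact Ideal.mul_mem_left _ _ (Ideal.subset_span (Or.inl rfl))
        · rw [pderiv_X_of_ne (by decide), mul_zero]
          exact zero_mem _
      · rw [pderiv_pow]
        rcases fin2_cases z with rfl | rfl
        · rw [pderiv_X_of_ne (by decide), mul_zero]
          exact zero_mem _
        · rw [pderiv_X_self, mul_one]
          exact Ideal.mul_mem_left _ _ (Ideal.subset_span (Or.inr rfl))
  | zero => rw [map_zero]; exact zero_mem _
  | add x y _ _ hx hy => rw [map_add]; exact add_mem hx hy
  | smul r x hmem hx =>
      rw [smul_eq_mul, pderiv_mul]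
      exact add_mem (Ideal.mul_mem_left _ _ (IS_le_IT m hmem)) (Ideal.mul_mem_left _ _ hx)

/-- `α : S → T` -/
def aST : SS m →ₐ[ℚ] TT m :=
  Ideal.Quotient.liftₐ (IS m) (mkT m) (fun a ha => by
    show Ideal.Quotient.mk (IT m) a = 0
    exact Ideal.Quotient.eq_zero_iff_mem.mpr (IS_le_IT m ha))

lemma aST_mkS (f : PP) : aST m (mkS m f) = mkT m f := rfl

/-- partial derivative `S → T` -/
def pdST (z : Fin 2) : SS m →ₗ[ℚ] TT m :=
  (Submodule.liftQ ((IS m).restrictScalars ℚ)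
      ((mkT m).toLinearMap ∘ₗ (pderiv z).toLinearMap)
      (fun f hf => by
        rw [LinearMap.mem_ker]
        show Ideal.Quotient.mk (IT m) (pderiv z f) = 0
        exact Ideal.Quotient.eq_zero_iff_mem.mpr (pderiv_IS m hf)) ) ∘ₗ
    (Submodule.Quotient.restrictScalarsEquiv ℚ
      ((IS m) : Submodule PP PP)).symm.toLinearMap

lemma pdST_mkS (z : Fin 2) (f : PP) : pdST m z (mkS m f) = mkT m (pderiv z f) := rfl

lemma pdST_leibniz (z : Fin 2) (s s' : SS m) :
    pdST m z (s * s') = aST m s * pdST m z s' + aST m s' * pdST m z s := by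
  obtain ⟨f, rfl⟩ := Ideal.Quotient.mk_surjective s
  obtain ⟨g, rfl⟩ := Ideal.Quotient.mk_surjective s'
  have hf : (Ideal.Quotient.mk (IS m)) f = mkS m f := rfl
  have hg : (Ideal.Quotient.mk (IS m)) g = mkS m g := rfl
  rw [hf, hg, ← map_mul, pdST_mkS, pdST_mkS, pdST_mkS, aST_mkS, aST_mkS, pderiv_mul, map_add,
    map_mul, map_mul]
  ring

lemma pdST_one (z : Fin 2) : pdST m z 1 = 0 := by
  have h1 : (1 : SS m) = mkS m 1 := (map_one _).symm
  rw [h1, pdST_mkS]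
  have h2 : pderiv z (1 : PP) = 0 := by simp
  rw [h2, map_zero]

lemma pdST_algebraMap (z : Fin 2) (r : ℚ) :
    pdST m z (algebraMap ℚ (SS m) r) = 0 := by
  have h1 : algebraMap ℚ (SS m) r = mkS m (C r) := by
    rw [← (mkS m).commutes r, MvPolynomial.algebraMap_eq]
  rw [h1, pdST_mkS]
  have h2 : pderiv z (C r : PP) = 0 := by simp
  rw [h2, map_zero]

end Model
noncomputable section ModelE

open MvPolynomial Submodule

variable (m : ℕ)

def EE := SS m × TT m

instance : AddCommGroup (EE m) := inferInstanceAs (AddCommGroup (SS m × TT m))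

instance : Ring (EE m) :=
  { (inferInstance : AddCommGroup (EE m)) with
    mul := fun p q => (p.1 * q.1,
      aST m p.1 * q.2 + aST m q.1 * p.2 + pdST m 1 p.1 * pdST m 0 q.1)
    one := ((1 : SS m), (0 : TT m))
    mul_assoc := by
      intro p q r
      apply Prod.ext
      · show p.1 * q.1 * r.1 = p.1 * (q.1 * r.1); ring
      · show aST m (p.1 * q.1) * r.2
            + aST m r.1 * (aST m p.1 * q.2 + aST m q.1 * p.2 + pdST m 1 p.1 * pdST m 0 q.1)
            + pdST m 1 (p.1 * q.1) * pdST m 0 r.1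
          = aST m p.1 * (aST m q.1 * r.2 + aST m r.1 * q.2 + pdST m 1 q.1 * pdST m 0 r.1)
            + aST m (q.1 * r.1) * p.2 + pdST m 1 p.1 * pdST m 0 (q.1 * r.1)
        rw [pdST_leibniz, pdST_leibniz, map_mul, map_mul]
        ring
    one_mul := by
      intro p
      apply Prod.ext
      · show 1 * p.1 = p.1; ring
      · show aST m 1 * p.2 + aST m p.1 * 0 + pdST m 1 1 * pdST m 0 p.1 = p.2
        rw [map_one, pdST_one]; ring
    mul_one := by
      intro p
      apply Prod.ext
      · show p.1 * 1 = p.1; ring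
      · show aST m p.1 * 0 + aST m 1 * p.2 + pdST m 1 p.1 * pdST m 0 1 = p.2
        rw [map_one, pdST_one]; ring
    left_distrib := by
      intro p q r
      apply Prod.ext
      · show p.1 * (q.1 + r.1) = p.1 * q.1 + p.1 * r.1; ring
      · show aST m p.1 * (q.2 + r.2) + aST m (q.1 + r.1) * p.2
            + pdST m 1 p.1 * pdST m 0 (q.1 + r.1)
          = (aST m p.1 * q.2 + aST m q.1 * p.2 + pdST m 1 p.1 * pdST m 0 q.1)
            + (aST m p.1 * r.2 + aST m r.1 * p.2 + pdST m 1 p.1 * pdST m 0 r.1)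
        rw [map_add, map_add]; ring
    right_distrib := by
      intro p q r
      apply Prod.ext
      · show (p.1 + q.1) * r.1 = p.1 * r.1 + q.1 * r.1; ring
      · show aST m (p.1 + q.1) * r.2 + aST m r.1 * (p.2 + q.2)
            + pdST m 1 (p.1 + q.1) * pdST m 0 r.1
          = (aST m p.1 * r.2 + aST m r.1 * p.2 + pdST m 1 p.1 * pdST m 0 r.1)
            + (aST m q.1 * r.2 + aST m r.1 * q.2 + pdST m 1 q.1 * pdST m 0 r.1)
        rw [map_add, map_add]; ring
    zero_mul := by
      intro p
      apply Prod.ext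
      · show 0 * p.1 = 0; ring
      · show aST m 0 * p.2 + aST m p.1 * 0 + pdST m 1 0 * pdST m 0 p.1 = 0
        rw [map_zero, map_zero]; ring
    mul_zero := by
      intro p
      apply Prod.ext
      · show p.1 * 0 = 0; ring
      · show aST m p.1 * 0 + aST m 0 * p.2 + pdST m 1 p.1 * pdST m 0 0 = 0
        rw [map_zero, map_zero]; ring }

def kEE : ℚ →+* EE m where
  toFun r := (algebraMap ℚ (SS m) r, 0)
  map_one' := by
    apply Prod.ext
    · show algebraMap ℚ (SS m) 1 = 1; rw [map_one]
    · rfl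
  map_mul' r s := by
    apply Prod.ext
    · show algebraMap ℚ (SS m) (r * s) = algebraMap ℚ (SS m) r * algebraMap ℚ (SS m) s
      rw [map_mul]
    · show (0 : TT m) = aST m (algebraMap ℚ (SS m) r) * 0 + aST m (algebraMap ℚ (SS m) s) * 0
        + pdST m 1 (algebraMap ℚ (SS m) r) * pdST m 0 (algebraMap ℚ (SS m) s)
      rw [pdST_algebraMap, pdST_algebraMap]; ring
  map_zero' := by
    apply Prod.ext
    · show algebraMap ℚ (SS m) 0 = 0; rw [map_zero]
    · rfl
  map_add' r s := by
    apply Prod.ext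
    · show algebraMap ℚ (SS m) (r + s) = algebraMap ℚ (SS m) r + algebraMap ℚ (SS m) s
      rw [map_add]
    · show (0 : TT m) = 0 + 0; ring

instance : Algebra ℚ (EE m) :=
  RingHom.toAlgebra' (kEE m) (by
    intro r p
    apply Prod.ext
    · show algebraMap ℚ (SS m) r * p.1 = p.1 * algebraMap ℚ (SS m) r; ring
    · show aST m (algebraMap ℚ (SS m) r) * p.2 + aST m p.1 * 0
          + pdST m 1 (algebraMap ℚ (SS m) r) * pdST m 0 p.1
        = aST m p.1 * 0 + aST m (algebraMap ℚ (SS m) r) * p.2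
          + pdST m 1 p.1 * pdST m 0 (algebraMap ℚ (SS m) r)
      rw [pdST_algebraMap, pdST_algebraMap]; ring)

lemma EE_mul_def (p q : EE m) : p * q = (p.1 * q.1,
    aST m p.1 * q.2 + aST m q.1 * p.2 + pdST m 1 p.1 * pdST m 0 q.1) := rfl

lemma EE_one_def : (1 : EE m) = ((1 : SS m), (0 : TT m)) := rfl

lemma EE_smul_def (r : ℚ) (p : EE m) : r • p = (r • p.1, r • p.2) := by
  have h : r • p = (kEE m r) * p := rfl
  rw [h, EE_mul_def]
  apply Prod.ext
  · show algebraMap ℚ (SS m) r * p.1 = r • p.1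
    rw [Algebra.smul_def]
  · show aST m (algebraMap ℚ (SS m) r) * p.2 + aST m p.1 * 0
        + pdST m 1 (algebraMap ℚ (SS m) r) * pdST m 0 p.1 = r • p.2
    rw [pdST_algebraMap, (aST m).commutes, mul_zero, zero_mul, add_zero, add_zero,
      Algebra.smul_def]

/-- generators in EE -/
def xE : EE m := (mkS m (X 0), 0)
def yE : EE m := (mkS m (X 1), 0)

lemma xE_pow (n : ℕ) : xE m ^ n = (mkS m (X 0 ^ n), 0) := by
  induction n with
  | zero => rw [pow_zero, pow_zero, map_one]; exact EE_one_def m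
  | succ n ih =>
      rw [pow_succ, ih]
      apply Prod.ext
      · show mkS m (X 0 ^ n) * mkS m (X 0) = mkS m (X 0 ^ (n + 1))
        rw [← map_mul, ← pow_succ]
      · show aST m (mkS m (X 0 ^ n)) * 0 + aST m (mkS m (X 0)) * 0
            + pdST m 1 (mkS m (X 0 ^ n)) * pdST m 0 (mkS m (X 0)) = 0
        rw [pdST_mkS]
        have h : pderiv (1 : Fin 2) ((X 0 : PP) ^ n) = 0 := by
          rw [pderiv_pow, pderiv_X_of_ne (by decide), mul_zero]
        rw [h, map_zero]; ring

lemma yE_pow (n : ℕ) : yE m ^ n = (mkS m (X 1 ^ n), 0) := by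
  induction n with
  | zero => rw [pow_zero, pow_zero, map_one]; exact EE_one_def m
  | succ n ih =>
      rw [pow_succ, ih]
      apply Prod.ext
      · show mkS m (X 1 ^ n) * mkS m (X 1) = mkS m (X 1 ^ (n + 1))
        rw [← map_mul, ← pow_succ]
      · show aST m (mkS m (X 1 ^ n)) * 0 + aST m (mkS m (X 1)) * 0
            + pdST m 1 (mkS m (X 1 ^ n)) * pdST m 0 (mkS m (X 1)) = 0
        rw [pdST_mkS (z := 0)]
        have h : pderiv (0 : Fin 2) ((X 1 : PP)) = 0 := pderiv_X_of_ne (by decide)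
        rw [h, map_zero]; ring

/-- the algebra map from the free algebra -/
def phi0 : FreeAlgebra ℚ (Fin 2) →ₐ[ℚ] EE m :=
  FreeAlgebra.lift ℚ (fun z => if z = 0 then xE m else yE m)

lemma phi0_i0 : phi0 m (ι ℚ (0 : Fin 2)) = xE m := by
  rw [phi0, FreeAlgebra.lift_ι_apply]; rfl

lemma phi0_i1 : phi0 m (ι ℚ (1 : Fin 2)) = yE m := by
  rw [phi0, FreeAlgebra.lift_ι_apply]; rfl

lemma phi0_rel : ∀ ⦃a b : FreeAlgebra ℚ (Fin 2)⦄, fRel m a b → phi0 m a = phi0 m b := by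
  rintro a b ⟨rfl, rfl⟩
  rw [map_add, map_pow, map_pow, map_zero, phi0_i0, phi0_i1, xE_pow, yE_pow]
  apply Prod.ext
  · show mkS m (X 0 ^ m) + mkS m (X 1 ^ m) = 0
    rw [← map_add]
    show Ideal.Quotient.mk (IS m) (X 0 ^ m + X 1 ^ m) = 0
    rw [Ideal.Quotient.eq_zero_iff_mem]
    exact add_mem (Ideal.subset_span (Or.inl rfl)) (Ideal.subset_span (Or.inr rfl))
  · show (0 : TT m) + 0 = 0; ring

/-- the algebra map `A → EE` -/
def phiA : Am m →ₐ[ℚ] EE m :=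
  RingQuot.liftAlgHom ℚ ⟨phi0 m, phi0_rel m⟩

lemma phiA_mk (f : FreeAlgebra ℚ (Fin 2)) :
    phiA m (RingQuot.mkAlgHom ℚ (fRel m) f) = phi0 m f := by
  rw [phiA]
  exact RingQuot.liftAlgHom_mkAlgHom_apply ℚ (phi0 m) (phi0_rel m) f

lemma phiA_X : phiA m (XA m) = xE m := by
  rw [XA, phiA_mk]; exact phi0_i0 m

lemma phiA_Y : phiA m (YA m) = yE m := by
  rw [YA, phiA_mk]; exact phi0_i1 m

lemma uE_val : xE m * yE m - yE m * xE m = ((0 : SS m), (-1 : TT m)) := by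
  rw [EE_mul_def, EE_mul_def]
  apply Prod.ext
  · show mkS m (X 0) * mkS m (X 1) - mkS m (X 1) * mkS m (X 0) = 0
    ring
  · show (aST m (mkS m (X 0)) * 0 + aST m (mkS m (X 1)) * 0
        + pdST m 1 (mkS m (X 0)) * pdST m 0 (mkS m (X 1)))
        - (aST m (mkS m (X 1)) * 0 + aST m (mkS m (X 0)) * 0
        + pdST m 1 (mkS m (X 1)) * pdST m 0 (mkS m (X 0))) = -1
    rw [pdST_mkS, pdST_mkS, pdST_mkS, pdST_mkS]
    rw [pderiv_X_of_ne (show (0:Fin 2) ≠ 1 by decide),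
      pderiv_X_of_ne (show (1:Fin 2) ≠ 0 by decide), pderiv_X_self, pderiv_X_self]
    rw [map_zero, map_one]
    ring

def mkEE (s : SS m) (t : TT m) : EE m := (s, t)

lemma mulL (g : PP) : mkEE m (mkS m g) 0 * mkEE m 0 (-1)
    = mkEE m 0 (-(mkT m g)) := by
  apply Prod.ext
  · show mkS m g * 0 = 0
    rw [mul_zero]
  · show aST m (mkS m g) * (-1) + aST m 0 * 0 + pdST m 1 (mkS m g) * pdST m 0 0
        = -(mkT m g)
    rw [map_zero, map_zero, aST_mkS]; ring

lemma mulXY (i j : ℕ) : mkEE m (mkS m (X 0 ^ i)) 0 * mkEE m (mkS m (X 1 ^ j)) 0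
    = mkEE m (mkS m (X 0 ^ i * X 1 ^ j)) 0 := by
  apply Prod.ext
  · show mkS m (X 0 ^ i) * mkS m (X 1 ^ j) = mkS m (X 0 ^ i * X 1 ^ j)
    rw [← map_mul]
  · show aST m (mkS m (X 0 ^ i)) * 0 + aST m (mkS m (X 1 ^ j)) * 0
        + pdST m 1 (mkS m (X 0 ^ i)) * pdST m 0 (mkS m (X 1 ^ j)) = 0
    rw [pdST_mkS]
    have h : pderiv (1 : Fin 2) ((X 0 : PP) ^ i) = 0 := by
      rw [pderiv_pow, pderiv_X_of_ne (by decide), mul_zero]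
    rw [h, map_zero]; ring

lemma phiA_eA (i j : ℕ) : phiA m (eA m i j) = mkEE m 0 (-(mkT m (X 0 ^ i * X 1 ^ j))) := by
  unfold eA UA
  rw [map_mul, map_mul, map_sub, map_mul, map_mul, map_pow, map_pow, phiA_X, phiA_Y,
    uE_val, xE_pow, yE_pow]
  exact (congrArg (fun w : EE m => w * mkEE m 0 (-1)) (mulXY m i j)).trans
    (mulL m (X 0 ^ i * X 1 ^ j))

end ModelE
noncomputable section Functionals

open MvPolynomial Submodule

variable (m : ℕ)

lemma EE_fst_sub (p q : EE m) : (p - q).1 = p.1 - q.1 := rfl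
lemma EE_fst_mul (p q : EE m) : (p * q).1 = p.1 * q.1 := rfl

lemma phiA_lcs2_fst {l : Am m} (hl : l ∈ lcs m 2) : (phiA m l).1 = 0 := by
  induction hl using Submodule.span_induction with
  | mem x hx =>
      obtain ⟨a, b, _, rfl⟩ := hx
      rw [map_sub, map_mul, map_mul, EE_fst_sub, EE_fst_mul, EE_fst_mul, mul_comm, sub_self]
  | zero => rw [map_zero]; rfl
  | add x y _ _ hx hy =>
      rw [map_add]
      show (phiA m x).1 + (phiA m y).1 = 0
      rw [hx, hy, add_zero]
  | smul c x _ hx =>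
      rw [map_smul, EE_smul_def, hx, smul_zero]

lemma central_snd (e e' : EE m) (h : e.1 = 0) : e' * e = e * e' := by
  obtain ⟨e1, e2⟩ := e
  simp only at h
  subst h
  apply Prod.ext
  · show e'.1 * 0 = 0 * e'.1; ring
  · show aST m e'.1 * e2 + aST m 0 * e'.2 + pdST m 1 e'.1 * pdST m 0 0
      = aST m 0 * e'.2 + aST m e'.1 * e2 + pdST m 1 0 * pdST m 0 e'.1
    rw [map_zero, map_zero, map_zero]
    ring

lemma phiA_lcs3 {l : Am m} (hl : l ∈ lcs m 3) : phiA m l = 0 := by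
  induction hl using Submodule.span_induction with
  | mem x hx =>
      obtain ⟨a, l, hl2, rfl⟩ := hx
      rw [map_sub, map_mul, map_mul]
      rw [central_snd m (phiA m l) (phiA m a) (phiA_lcs2_fst m hl2), sub_self]
  | zero => rw [map_zero]
  | add x y _ _ hx hy => rw [map_add, hx, hy, add_zero]
  | smul c x _ hx => rw [map_smul, hx, smul_zero]

lemma phiA_Mid3 {z : Am m} (hz : z ∈ Mid m 3) : phiA m z = 0 := by
  induction hz using Submodule.span_induction with
  | mem x hx =>
      obtain ⟨a, l, b, hl, rfl⟩ := hx
      rw [map_mul, map_mul, phiA_lcs3 m hl, mul_zero, zero_mul]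
  | zero => rw [map_zero]
  | add x y _ _ hx hy => rw [map_add, hx, hy, add_zero]
  | smul c x _ hx => rw [map_smul, hx, smul_zero]

/-- `Φ : A/M₃ → EE` -/
def PhiQ : (Am m ⧸ Mid m 3) →ₗ[ℚ] EE m :=
  Submodule.liftQ (Mid m 3) (phiA m).toLinearMap
    (fun z hz => by
      rw [LinearMap.mem_ker]
      exact phiA_Mid3 m hz)

lemma PhiQ_mk (a : Am m) : PhiQ m (Submodule.Quotient.mk a) = phiA m a := rfl

/-- second projection as linear map -/
def sndE : EE m →ₗ[ℚ] TT m where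
  toFun e := e.2
  map_add' p q := rfl
  map_smul' r p := by
    show (r • p).2 = r • p.2
    rw [EE_smul_def]

/-- coefficient functionals on `TT` -/
def coefT (i j : ℕ) (hi : i < m - 1) (hj : j < m - 1) : TT m →ₗ[ℚ] ℚ :=
  (Submodule.liftQ ((IT m).restrictScalars ℚ)
      (lcoeff ℚ (Finsupp.single 0 i + Finsupp.single 1 j))
      (fun f hf => by
        rw [LinearMap.mem_ker]
        show coeff (Finsupp.single 0 i + Finsupp.single 1 j) f = 0
        have hf' : f ∈ IT m := hf
        rw [IT] at hf'
        obtain ⟨u, v, huv⟩ := Ideal.mem_span_pair.1 hf'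
        rw [← huv, coeff_add]
        have h1 : coeff (Finsupp.single 0 i + Finsupp.single 1 j) (u * X 0 ^ (m - 1)) = 0 := by
          rw [X_pow_eq_monomial, coeff_mul_monomial']
          rw [if_neg]
          intro hle
          have h0 := hle 0
          simp only [Finsupp.single_eq_same, Finsupp.add_apply,
            Finsupp.single_eq_of_ne' (show (1 : Fin 2) ≠ 0 by decide), add_zero] at h0
          omega
        have h2 : coeff (Finsupp.single 0 i + Finsupp.single 1 j) (v * X 1 ^ (m - 1)) = 0 := by
          rw [X_pow_eq_monomial, coeff_mul_monomial']
          rw [if_neg]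
          intro hle
          have h0 := hle 1
          simp only [Finsupp.single_eq_same, Finsupp.add_apply,
            Finsupp.single_eq_of_ne' (show (0 : Fin 2) ≠ 1 by decide), zero_add] at h0
          omega
        rw [h1, h2, add_zero])) ∘ₗ
    (Submodule.Quotient.restrictScalarsEquiv ℚ
      ((IT m) : Submodule PP PP)).symm.toLinearMap

lemma coefT_mkT (i j : ℕ) (hi : i < m - 1) (hj : j < m - 1) (f : PP) :
    coefT m i j hi hj (mkT m f) = coeff (Finsupp.single 0 i + Finsupp.single 1 j) f := rfl

lemma sp_eq_iff (a b i j : ℕ) :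
    (Finsupp.single (0 : Fin 2) a + Finsupp.single 1 b = Finsupp.single 0 i + Finsupp.single 1 j)
      ↔ (a = i ∧ b = j) := by
  constructor
  · intro h
    constructor
    · have h0 := DFunLike.congr_fun h 0
      simpa [Finsupp.single_eq_of_ne (show (1 : Fin 2) ≠ 0 by decide)] using h0
    · have h1 := DFunLike.congr_fun h 1
      simpa [Finsupp.single_eq_of_ne (show (0 : Fin 2) ≠ 1 by decide)] using h1
  · rintro ⟨rfl, rfl⟩; rfl

lemma coefT_mono (i j a b : ℕ) (hi : i < m - 1) (hj : j < m - 1) :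
    coefT m i j hi hj (mkT m (X 0 ^ a * X 1 ^ b))
      = if a = i ∧ b = j then 1 else 0 := by
  rw [coefT_mkT, X_pow_eq_monomial, X_pow_eq_monomial, monomial_mul, coeff_monomial, mul_one]
  by_cases hc : a = i ∧ b = j
  · rw [if_pos ((sp_eq_iff a b i j).2 hc), if_pos hc]
  · rw [if_neg (fun h => hc ((sp_eq_iff a b i j).1 h)), if_neg hc]

/-- the full coordinate functionals on `A/M₃` -/
def LL (i j : ℕ) (hi : i < m - 1) (hj : j < m - 1) : (Am m ⧸ Mid m 3) →ₗ[ℚ] ℚ :=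
  (coefT m i j hi hj) ∘ₗ (sndE m) ∘ₗ (PhiQ m)

lemma LL_eA (i j a b : ℕ) (hi : i < m - 1) (hj : j < m - 1) :
    LL m i j hi hj (Submodule.Quotient.mk (eA m a b))
      = -(if a = i ∧ b = j then 1 else 0) := by
  rw [LL, LinearMap.comp_apply, LinearMap.comp_apply, PhiQ_mk, phiA_eA]
  show coefT m i j hi hj (-(mkT m (X 0 ^ a * X 1 ^ b))) = _
  rw [map_neg, coefT_mono]

end Functionals
noncomputable section Homog

open MvPolynomial Submodule

variable (m : ℕ)

/-- bespoke homogeneity -/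
def Hom (n : ℕ) (f : PP) : Prop := ∀ d : Fin 2 →₀ ℕ, coeff d f ≠ 0 → d 0 + d 1 = n

lemma Hom_zero (n : ℕ) : Hom n 0 := fun d hd => absurd (coeff_zero d) hd

lemma Hom_one : Hom 0 1 := by
  intro d hd
  rw [coeff_one] at hd
  by_cases h : 0 = d
  · subst h; rfl
  · rw [if_neg h] at hd; exact absurd rfl hd

lemma Hom_add {n : ℕ} {f g : PP} (hf : Hom n f) (hg : Hom n g) : Hom n (f + g) := by
  intro d hd
  rw [coeff_add] at hd
  by_cases h : coeff d f ≠ 0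
  · exact hf d h
  · push_neg at h
    rw [h, zero_add] at hd
    exact hg d hd

lemma Hom_X (z : Fin 2) : Hom 1 (X z : PP) := by
  intro d hd
  rw [X, coeff_monomial] at hd
  by_cases h : Finsupp.single z 1 = d
  · subst h
    rcases fin2_cases z with rfl | rfl <;>
      simp [Finsupp.single_apply]
  · rw [if_neg h] at hd; exact absurd rfl hd

lemma Hom_mul {n n' : ℕ} {f g : PP} (hf : Hom n f) (hg : Hom n' g) : Hom (n + n') (f * g) := by
  classical
  intro d hd
  rw [coeff_mul] at hd
  obtain ⟨⟨a, b⟩, hmem, hne⟩ := Finset.exists_ne_zero_of_sum_ne_zero hd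
  have hab : a + b = d := Finset.HasAntidiagonal.mem_antidiagonal.1 hmem
  have ha := hf a (left_ne_zero_of_mul hne)
  have hb := hg b (right_ne_zero_of_mul hne)
  have h0 : d 0 = a 0 + b 0 := by rw [← hab, Finsupp.add_apply]
  have h1 : d 1 = a 1 + b 1 := by rw [← hab, Finsupp.add_apply]
  omega

lemma Hom_pderiv {n : ℕ} {f : PP} (z : Fin 2) (hf : Hom n f) : Hom (n - 1) (pderiv z f) := by
  classical
  intro d hd
  have hrw : pderiv z f
      = ∑ v ∈ f.support, monomial (v - Finsupp.single z 1) (coeff v f * v z) := by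
    conv_lhs => rw [f.as_sum]
    rw [map_sum]
    exact Finset.sum_congr rfl (fun v _ => pderiv_monomial)
  rw [hrw, coeff_sum] at hd
  obtain ⟨v, _, hne⟩ := Finset.exists_ne_zero_of_sum_ne_zero hd
  rw [coeff_monomial] at hne
  by_cases h : v - Finsupp.single z 1 = d
  · rw [if_pos h] at hne
    have hvz : v z ≠ 0 := by
      intro h0; rw [h0] at hne; simp at hne
    have hcv : coeff v f ≠ 0 := by
      intro h0; rw [h0] at hne; simp at hne
    have hv := hf v hcv
    have hd0 : d 0 = v 0 - Finsupp.single z 1 0 := by rw [← h, Finsupp.tsub_apply]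
    have hd1 : d 1 = v 1 - Finsupp.single z 1 1 := by rw [← h, Finsupp.tsub_apply]
    rcases fin2_cases z with rfl | rfl <;>
      simp only [Finsupp.single_eq_same,
        Finsupp.single_eq_of_ne (show (0:Fin 2) ≠ 1 by decide),
        Finsupp.single_eq_of_ne (show (1:Fin 2) ≠ 0 by decide)] at hd0 hd1 hvz ⊢ <;>
      omega
  · rw [if_neg h] at hne; exact absurd rfl hne

lemma Hom_cast {n n' : ℕ} {f : PP} (hf : Hom n f) (h : n = n') : Hom n' f := h ▸ hf

/-- product rule in `EE` for pairs of the form `(mkS p, mkT g)` -/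
lemma mulGen (p f g : PP) :
    mkEE m (mkS m p) 0 * mkEE m (mkS m f) (mkT m g)
      = mkEE m (mkS m (p * f)) (mkT m (p * g + pderiv 1 p * pderiv 0 f)) := by
  apply Prod.ext
  · show mkS m p * mkS m f = mkS m (p * f)
    rw [map_mul]
  · show aST m (mkS m p) * mkT m g + aST m (mkS m f) * 0
        + pdST m 1 (mkS m p) * pdST m 0 (mkS m f)
      = mkT m (p * g + pderiv 1 p * pderiv 0 f)
    rw [aST_mkS, pdST_mkS, pdST_mkS, map_add, map_mul, map_mul]
    ring

lemma phi0_word : ∀ w : List (Fin 2), ∃ f g : PP,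
    Hom w.length f ∧ Hom (w.length - 2) g ∧ (w.length < 2 → g = 0) ∧ (w.length = 0 → f = 1)
      ∧ phi0 m ((w.map (ι ℚ)).prod) = mkEE m (mkS m f) (mkT m g) := by
  intro w
  induction w with
  | nil =>
      refine ⟨1, 0, Hom_one, Hom_zero _, fun _ => rfl, fun _ => rfl, ?_⟩
      rw [List.map_nil, List.prod_nil, map_one, map_one, map_zero]
      exact EE_one_def m
  | cons z t ih =>
      obtain ⟨f, g, hf, hg, hg2, hf0, heq⟩ := ih
      have hstep : phi0 m (((z :: t).map (ι ℚ)).prod)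
          = phi0 m (ι ℚ z) * mkEE m (mkS m f) (mkT m g) := by
        rw [List.map_cons, List.prod_cons, map_mul, heq]
      rcases fin2_cases z with rfl | rfl
      · -- z = 0
        have hl : phi0 m (ι ℚ (0 : Fin 2)) = mkEE m (mkS m (X 0)) 0 := phi0_i0 m
        have hmul : phi0 m (((((0:Fin 2)) :: t).map (ι ℚ)).prod)
            = mkEE m (mkS m (X 0 * f)) (mkT m (X 0 * g)) := by
          rw [hstep, hl, mulGen]
          have h1 : pderiv (1 : Fin 2) (X 0 : PP) = 0 := pderiv_X_of_ne (by decide)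
          rw [h1, zero_mul, add_zero]
        refine ⟨X 0 * f, X 0 * g, ?_, ?_, ?_, ?_, hmul⟩
        · exact Hom_cast (Hom_mul (Hom_X 0) hf) (by simp only [List.length_cons]; omega)
        · by_cases hlen : t.length < 2
          · rw [hg2 hlen, mul_zero]; exact Hom_zero _
          · exact Hom_cast (Hom_mul (Hom_X 0) hg) (by simp only [List.length_cons]; omega)
        · intro hlt
          rw [hg2 (by simp only [List.length_cons] at hlt ⊢; omega), mul_zero]
        · intro h0; simp at h0
      · -- z = 1
        have hl : phi0 m (ι ℚ (1 : Fin 2)) = mkEE m (mkS m (X 1)) 0 := phi0_i1 m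
        have hmul : phi0 m (((((1:Fin 2)) :: t).map (ι ℚ)).prod)
            = mkEE m (mkS m (X 1 * f)) (mkT m (X 1 * g + pderiv 0 f)) := by
          rw [hstep, hl, mulGen, pderiv_X_self, one_mul]
        refine ⟨X 1 * f, X 1 * g + pderiv 0 f, ?_, ?_, ?_, ?_, hmul⟩
        · exact Hom_cast (Hom_mul (Hom_X 1) hf) (by simp only [List.length_cons]; omega)
        · refine Hom_add ?_ ?_
          · by_cases hlen : t.length < 2
            · rw [hg2 hlen, mul_zero]; exact Hom_zero _
            · exact Hom_cast (Hom_mul (Hom_X 1) hg) (by simp only [List.length_cons]; omega)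
          · rcases Nat.eq_zero_or_pos t.length with h0 | hpos
            · rw [hf0 h0]
              have : pderiv (0 : Fin 2) (1 : PP) = 0 := by simp
              rw [this]; exact Hom_zero _
            · exact Hom_cast (Hom_pderiv 0 hf) (by simp only [List.length_cons]; omega)
        · intro hlt
          have h0 : t.length = 0 := by simp only [List.length_cons] at hlt; omega
          rw [hg2 (by omega), mul_zero, hf0 h0, zero_add]
          simp
        · intro h0; simp at h0
end Homog
noncomputable section Final

open MvPolynomial Submodule

variable (m : ℕ)

/-- the candidate basis family in `A/M₃` -/
def fam : Fin (m - 1) × Fin (m - 1) → (Am m ⧸ Mid m 3) :=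
  fun p => Submodule.Quotient.mk (eA m (p.1 : ℕ) (p.2 : ℕ))

lemma eA_mem_Mid2 (i j : ℕ) : eA m i j ∈ Mid m 2 := by
  apply Submodule.subset_span
  exact ⟨XA m ^ i * YA m ^ j, UA m, 1, UA_mem_lcs2 m, by rw [mul_one]; rfl⟩

lemma fam_mem_N2 (p : Fin (m - 1) × Fin (m - 1)) : fam m p ∈ N2 m :=
  Submodule.mem_map_of_mem (eA_mem_Mid2 m _ _)

lemma N2_eq_span (hm : 2 ≤ m) : N2 m = Submodule.span ℚ (Set.range (fam m)) := by
  apply le_antisymm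
  · rintro v ⟨z, hz, rfl⟩
    have hz' := Mid2_le_Espan m hm hz
    rw [Espan] at hz'
    rcases Submodule.mem_sup.1 hz' with ⟨z1, hz1, z2, hz2, rfl⟩
    rw [map_add]
    have h2 : (Mid m 3).mkQ z2 = 0 := (Submodule.Quotient.mk_eq_zero _).2 hz2
    rw [h2, add_zero]
    have h1 : (Mid m 3).mkQ z1 ∈ Submodule.map (Mid m 3).mkQ
        (Submodule.span ℚ (Set.range fun p : Fin (m - 1) × Fin (m - 1) =>
          eA m (p.1 : ℕ) (p.2 : ℕ))) := Submodule.mem_map_of_mem hz1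
    rw [Submodule.map_span, ← Set.range_comp] at h1
    exact h1
  · rw [Submodule.span_le]
    rintro x ⟨p, rfl⟩
    exact fam_mem_N2 m p

lemma LL_fam (q : Fin (m - 1) × Fin (m - 1)) (p : Fin (m - 1) × Fin (m - 1)) :
    LL m q.1 q.2 q.1.isLt q.2.isLt (fam m p) = -(if p = q then 1 else 0) := by
  rw [fam, LL_eA]
  congr 1
  by_cases h : p = q
  · rw [if_pos ?_, if_pos h]
    subst h; exact ⟨rfl, rfl⟩
  · rw [if_neg ?_, if_neg h]
    intro ⟨h1, h2⟩
    exact h (Prod.ext (Fin.ext h1) (Fin.ext h2))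

lemma LL_sum (g : Fin (m - 1) × Fin (m - 1) → ℚ) (q : Fin (m - 1) × Fin (m - 1)) :
    LL m q.1 q.2 q.1.isLt q.2.isLt (∑ p, g p • fam m p) = -(g q) := by
  rw [map_sum]
  have hterm : ∀ p : Fin (m - 1) × Fin (m - 1),
      LL m q.1 q.2 q.1.isLt q.2.isLt (g p • fam m p)
        = g p * -(if p = q then 1 else 0) := by
    intro p
    rw [map_smul, smul_eq_mul, LL_fam]
  rw [Finset.sum_congr rfl (fun p _ => hterm p)]
  rw [Finset.sum_eq_single q]
  · rw [if_pos rfl]; ring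
  · intro p _ hp
    rw [if_neg hp]; ring
  · intro h
    exact absurd (Finset.mem_univ q) h

lemma fam_li : LinearIndependent ℚ (fam m) := by
  rw [Fintype.linearIndependent_iff]
  intro g hg q
  have h := LL_sum m g q
  rw [hg, map_zero] at h
  linarith [h]

/-- the functional kills the degree-`d` part when degrees mismatch -/
lemma LL_qDeg (i j d : ℕ) (hi : i < m - 1) (hj : j < m - 1) (hne : i + j + 2 ≠ d) :
    ∀ v ∈ qDeg m d, LL m i j hi hj v = 0 := by
  have key : ∀ f ∈ freeDeg d,
      LL m i j hi hj ((Mid m 3).mkQ ((RingQuot.mkAlgHom ℚ (fRel m)).toLinearMap f)) = 0 := by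
    intro f hf
    induction hf using Submodule.span_induction with
    | mem x hx =>
        obtain ⟨w, hw, rfl⟩ := hx
        obtain ⟨f, g, hfh, hgh, hg2, _, heq⟩ := phi0_word m w
        have hL : LL m i j hi hj
            ((Mid m 3).mkQ ((RingQuot.mkAlgHom ℚ (fRel m)).toLinearMap ((w.map (ι ℚ)).prod)))
            = coefT m i j hi hj (mkT m g) := by
          rw [LL, LinearMap.comp_apply, LinearMap.comp_apply]
          have h1 : PhiQ m ((Mid m 3).mkQ
              ((RingQuot.mkAlgHom ℚ (fRel m)).toLinearMap ((w.map (ι ℚ)).prod)))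
              = phi0 m ((w.map (ι ℚ)).prod) := by
            show phiA m ((RingQuot.mkAlgHom ℚ (fRel m)) ((w.map (ι ℚ)).prod)) = _
            exact phiA_mk m _
          rw [h1, heq]
          rfl
        rw [hL, coefT_mkT]
        by_cases hd2 : d < 2
        · rw [hg2 (by omega), coeff_zero]
        · by_contra hc
          have := hgh _ hc
          simp only [Finsupp.add_apply, Finsupp.single_eq_same,
            Finsupp.single_eq_of_ne (show (1:Fin 2) ≠ 0 by decide),
            Finsupp.single_eq_of_ne (show (0:Fin 2) ≠ 1 by decide), add_zero, zero_add,
            hw] at this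
          omega
    | zero => rw [map_zero]; show LL m i j hi hj ((Mid m 3).mkQ (0 : Am m)) = 0; rw [map_zero, map_zero]
    | add x y _ _ hx hy => rw [map_add]; have e : (Mid m 3).mkQ ((RingQuot.mkAlgHom ℚ (fRel m)).toLinearMap x + (RingQuot.mkAlgHom ℚ (fRel m)).toLinearMap y) = (Mid m 3).mkQ ((RingQuot.mkAlgHom ℚ (fRel m)).toLinearMap x) + (Mid m 3).mkQ ((RingQuot.mkAlgHom ℚ (fRel m)).toLinearMap y) := map_add (Mid m 3).mkQ ((RingQuot.mkAlgHom ℚ (fRel m)).toLinearMap x) ((RingQuot.mkAlgHom ℚ (fRel m)).toLinearMap y); rw [e, map_add, hx, hy, add_zero]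
    | smul c x _ hx => rw [map_smul]; have e : (Mid m 3).mkQ (c • (RingQuot.mkAlgHom ℚ (fRel m)).toLinearMap x) = c • (Mid m 3).mkQ ((RingQuot.mkAlgHom ℚ (fRel m)).toLinearMap x) := map_smul (Mid m 3).mkQ c ((RingQuot.mkAlgHom ℚ (fRel m)).toLinearMap x); rw [e, map_smul, hx, smul_zero]
  rintro v ⟨u, ⟨f, hf, rfl⟩, rfl⟩
  exact key f hf

lemma pw_append (u v : List (Fin 2)) : pw m (u ++ v) = pw m u * pw m v := by
  unfold pw
  rw [List.map_append, List.prod_append, map_mul]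
  rfl

lemma pw_replicate (i : ℕ) (z : Fin 2) :
    pw m (List.replicate i z) = letterA m z ^ i := by
  unfold pw letterA
  rw [List.map_replicate, List.prod_replicate, map_pow]
  rfl

lemma fam_mem_qDeg (d : ℕ) (p : Fin (m - 1) × Fin (m - 1))
    (hd : (p.1 : ℕ) + (p.2 : ℕ) + 2 = d) : fam m p ∈ qDeg m d := by
  set i := (p.1 : ℕ)
  set j := (p.2 : ℕ)
  set w1 : List (Fin 2) := List.replicate i 0 ++ List.replicate j 1 ++ [0, 1] with hw1
  set w2 : List (Fin 2) := List.replicate i 0 ++ List.replicate j 1 ++ [1, 0] with hw2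
  set F : FreeAlgebra ℚ (Fin 2) := (w1.map (ι ℚ)).prod - (w2.map (ι ℚ)).prod with hF
  have hFdeg : F ∈ freeDeg d := by
    apply sub_mem
    · exact Submodule.subset_span ⟨w1, by simp [hw1]; omega, rfl⟩
    · exact Submodule.subset_span ⟨w2, by simp [hw2]; omega, rfl⟩
  have hpi : (RingQuot.mkAlgHom ℚ (fRel m)).toLinearMap F = eA m i j := by
    have h1 : (RingQuot.mkAlgHom ℚ (fRel m)).toLinearMap F = pw m w1 - pw m w2 := by
      rw [hF, map_sub]; rfl
    rw [h1, hw1, hw2, pw_append, pw_append, pw_append, pw_append, pw_replicate, pw_replicate]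
    have h01 : pw m [0, 1] = XA m * YA m := by
      rw [pw_cons, pw_cons, pw_nil, letterA_zero, letterA_one, mul_one]
    have h10 : pw m [1, 0] = YA m * XA m := by
      rw [pw_cons, pw_cons, pw_nil, letterA_zero, letterA_one, mul_one]
    rw [h01, h10, letterA_zero, letterA_one]
    unfold eA UA
    noncomm_ring
  have : fam m p = (Mid m 3).mkQ ((RingQuot.mkAlgHom ℚ (fRel m)).toLinearMap F) := by
    rw [hpi]; rfl
  rw [this]
  exact Submodule.mem_map_of_mem (Submodule.mem_map_of_mem hFdeg)

/-- master graded dimension lemma -/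
lemma graded_dim (hm : 2 ≤ m) (d k : ℕ) (embed : Fin k → Fin (m - 1) × Fin (m - 1))
    (hinj : Function.Injective embed)
    (hmem : ∀ i, ((embed i).1 : ℕ) + ((embed i).2 : ℕ) + 2 = d)
    (hsurj : ∀ p : Fin (m - 1) × Fin (m - 1),
      ((p.1 : ℕ) + (p.2 : ℕ) + 2 = d) → ∃ i, embed i = p) :
    Module.finrank ℚ ↥(N2 m ⊓ qDeg m d) = k := by
  have hset : N2 m ⊓ qDeg m d = Submodule.span ℚ (Set.range (fam m ∘ embed)) := by
    apply le_antisymm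
    · rintro v ⟨hv1, hv2⟩
      rw [N2_eq_span m hm] at hv1
      obtain ⟨g, hgv⟩ := mem_span_range_iff_exists_fun ℚ |>.1 hv1
      have hzero : ∀ p : Fin (m - 1) × Fin (m - 1),
          ((p.1 : ℕ) + (p.2 : ℕ) + 2 ≠ d) → g p = 0 := by
        intro p hp
        have h1 := LL_qDeg m p.1 p.2 d p.1.isLt p.2.isLt hp v hv2
        rw [← hgv, LL_sum] at h1
        rwa [neg_eq_zero] at h1
      rw [← hgv]
      apply Submodule.sum_mem
      intro p _
      by_cases hp : (p.1 : ℕ) + (p.2 : ℕ) + 2 = d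
      · obtain ⟨i, rfl⟩ := hsurj p hp
        exact Submodule.smul_mem _ _ (Submodule.subset_span ⟨i, rfl⟩)
      · rw [hzero p hp, zero_smul]
        exact zero_mem _
    · rw [Submodule.span_le]
      rintro x ⟨i, rfl⟩
      exact ⟨fam_mem_N2 m _, fam_mem_qDeg m d _ (hmem i)⟩
  rw [hset, finrank_span_eq_card ((fam_li m).comp embed hinj)]
  exact Fintype.card_fin k

end Final
/-- For `A = ℚ⟨x,y⟩/(x^m + y^m)` with `m ≥ 2`, the elements `x^i y^j u`
(`0 ≤ i,j ≤ m-2`, `u = [x,y]`) form a ℚ-basis of `N₂(A) = M₂(A)/M₃(A)`;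
consequently `dim N₂(A)[d] = d-1` for `2 ≤ d < m`, `= 2m-d-1` for
`m ≤ d ≤ 2m-2`, and `= 0` otherwise. -/
theorem stmt_6 (m : ℕ) (hm : 2 ≤ m) :
    (∃ b : Module.Basis (Fin (m - 1) × Fin (m - 1)) ℚ (N2 m),
      ∀ p : Fin (m - 1) × Fin (m - 1),
        (b p : Am m ⧸ Mid m 3) =
          Submodule.Quotient.mk
            (XA m ^ (p.1 : ℕ) * YA m ^ (p.2 : ℕ) *
              (XA m * YA m - YA m * XA m))) ∧
    (∀ d : ℕ, 2 ≤ d → d < m →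
      Module.finrank ℚ ↥(N2 m ⊓ qDeg m d) = d - 1) ∧
    (∀ d : ℕ, m ≤ d → d ≤ 2 * m - 2 →
      Module.finrank ℚ ↥(N2 m ⊓ qDeg m d) = 2 * m - d - 1) ∧
    (∀ d : ℕ, d < 2 ∨ 2 * m - 2 < d →
      Module.finrank ℚ ↥(N2 m ⊓ qDeg m d) = 0) := by
  refine ⟨?_, ?_, ?_, ?_⟩
  · -- basis
    let famN : Fin (m - 1) × Fin (m - 1) → ↥(N2 m) := fun p => ⟨fam m p, fam_mem_N2 m p⟩
    have hli : LinearIndependent ℚ famN := by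
      apply LinearIndependent.of_comp (N2 m).subtype
      have h1 : (N2 m).subtype ∘ famN = fam m := rfl
      rw [h1]
      exact fam_li m
    have hsp : ⊤ ≤ Submodule.span ℚ (Set.range famN) := by
      have hinj := Submodule.injective_subtype (N2 m)
      have hmap : Submodule.map (N2 m).subtype (Submodule.span ℚ (Set.range famN))
          = Submodule.map (N2 m).subtype ⊤ := by
        rw [Submodule.map_span, ← Set.range_comp]
        have h1 : ((N2 m).subtype ∘ famN) = fam m := rfl
        rw [h1, Submodule.map_top, Submodule.range_subtype, ← N2_eq_span m hm]
      exact (Submodule.map_injective_of_injective hinj hmap).ge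
    refine ⟨Module.Basis.mk hli hsp, fun p => ?_⟩
    rw [Module.Basis.mk_apply]
    rfl
  · -- 2 ≤ d < m
    intro d h2 hdm
    refine graded_dim m hm d (d - 1)
      (fun i => (⟨(i : ℕ), by have := i.isLt; omega⟩, ⟨d - 2 - (i : ℕ), by omega⟩))
      ?_ ?_ ?_
    · intro a b hab
      have h := congrArg (fun p : Fin (m - 1) × Fin (m - 1) => (p.1 : ℕ)) hab
      simp only at h
      exact Fin.ext h
    · intro i
      have := i.isLt
      simp only
      omega
    · intro p hp
      have h1 := p.1.isLt
      have h2 := p.2.isLt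
      refine ⟨⟨(p.1 : ℕ), by omega⟩, ?_⟩
      apply Prod.ext <;> apply Fin.ext <;> simp only <;> omega
  · -- m ≤ d ≤ 2m-2
    intro d hmd h2m
    refine graded_dim m hm d (2 * m - d - 1)
      (fun i => (⟨(i : ℕ) + (d - m), by have := i.isLt; omega⟩,
        ⟨m - 2 - (i : ℕ), by have := i.isLt; omega⟩))
      ?_ ?_ ?_
    · intro a b hab
      have h := congrArg (fun p : Fin (m - 1) × Fin (m - 1) => (p.1 : ℕ)) hab
      simp only at h
      exact Fin.ext (by omega)
    · intro i
      have := i.isLt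
      simp only
      omega
    · intro p hp
      have h1 := p.1.isLt
      have h2 := p.2.isLt
      refine ⟨⟨(p.1 : ℕ) - (d - m), by omega⟩, ?_⟩
      apply Prod.ext <;> apply Fin.ext <;> simp only <;> omega
  · -- degenerate degrees
    intro d hd
    refine graded_dim m hm d 0 Fin.elim0 (fun a => a.elim0) (fun i => i.elim0) ?_
    intro p hp
    exfalso
    have h1 := p.1.isLt
    have h2 := p.2.isLt
    rcases hd with hd | hd <;> omega
end

section
/- Let f ∈ ℂ[x,y] be a nonzero homogeneous polynomial of degree m with exactly s distinct linear factors, with multiplicities m_1,...,m_s summing to m. Then lcm(∂f/∂x, ∂f/∂y) is homogeneous of degree m + s - 2 (assuming f is not a constant multiple of a power of a single linear form, or interpreting in general with f_x, f_y not both zero). -/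
open MvPolynomial Finset

private lemma stmt9_prime_lin1 (t : ℂ) :
    Prime (X 0 + C t * X 1 : MvPolynomial (Fin 2) ℂ) := by
  have h1 : (MvPolynomial.finSuccEquiv ℂ 1) (X 0 + C t * X 1 : MvPolynomial (Fin 2) ℂ)
      = Polynomial.X - Polynomial.C (-(C t * X 0) : MvPolynomial (Fin 1) ℂ) := by
    have h2 : (1 : Fin 2) = (0 : Fin 1).succ := rfl
    have h3 : (MvPolynomial.finSuccEquiv ℂ 1) (C t) = Polynomial.C (C t) := by
      simp [finSuccEquiv_apply]
    rw [map_add, map_mul, h2, finSuccEquiv_X_zero, finSuccEquiv_X_succ, h3, map_neg, map_mul]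
    ring
  have hp : Prime ((MvPolynomial.finSuccEquiv ℂ 1) (X 0 + C t * X 1 : MvPolynomial (Fin 2) ℂ)) := by
    rw [h1]; exact Polynomial.prime_X_sub_C _
  exact (MulEquiv.prime_iff (MvPolynomial.finSuccEquiv ℂ 1).toMulEquiv).mp hp

private lemma stmt9_prime_lin2 (t : ℂ) :
    Prime (X 1 + C t * X 0 : MvPolynomial (Fin 2) ℂ) := by
  have h1 : (renameEquiv ℂ (Equiv.swap (0:Fin 2) 1)) (X 0 + C t * X 1)
      = (X 1 + C t * X 0 : MvPolynomial (Fin 2) ℂ) := by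
    simp [renameEquiv_apply]
  have := (MulEquiv.prime_iff (p := (X 0 + C t * X 1 : MvPolynomial (Fin 2) ℂ))
      (renameEquiv ℂ (Equiv.swap (0:Fin 2) 1)).toMulEquiv).mpr
  simpa [h1] using this (stmt9_prime_lin1 t)

private lemma stmt9_prime_lin {a b : ℂ} (h : (a, b) ≠ 0) :
    Prime (C a * X 0 + C b * X 1 : MvPolynomial (Fin 2) ℂ) := by
  rcases eq_or_ne a 0 with rfl | ha
  · have hb : b ≠ 0 := by simpa [Prod.ext_iff] using h
    have key : (C (0:ℂ) * X 0 + C b * X 1 : MvPolynomial (Fin 2) ℂ)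
        = C b * (X 1 + C (0/b) * X 0) := by
      simp
    rw [key]
    exact ((associated_unit_mul_left _ _ ((isUnit_iff_ne_zero.mpr hb).map C)).symm).prime
      ((stmt9_prime_lin2 _))
  · have key : (C a * X 0 + C b * X 1 : MvPolynomial (Fin 2) ℂ)
        = C a * (X 0 + C (b/a) * X 1) := by
      rw [mul_add, ← mul_assoc, ← C_mul, mul_div_cancel₀ _ ha]
    rw [key]
    exact ((associated_unit_mul_left _ _ ((isUnit_iff_ne_zero.mpr ha).map C)).symm).prime
      ((stmt9_prime_lin1 _))

private lemma stmt9_pderiv_finset_prod {ι : Type*} [DecidableEq ι] (k : Fin 2) (s : Finset ι)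
    (g : ι → MvPolynomial (Fin 2) ℂ) :
    pderiv k (∏ i ∈ s, g i) = ∑ i ∈ s, pderiv k (g i) * ∏ j ∈ s.erase i, g j := by
  induction s using Finset.induction_on with
  | empty => simp
  | insert x s' hx ih =>
    rw [Finset.prod_insert hx, pderiv_mul, ih, Finset.sum_insert hx, Finset.erase_insert hx,
      Finset.mul_sum]
    congr 1
    apply Finset.sum_congr rfl
    intro i hi
    rw [Finset.erase_insert_of_ne (by rintro rfl; exact hx hi)]
    rw [Finset.prod_insert (fun h => hx (Finset.mem_of_mem_erase h))]
    ring

private lemma stmt9_deriv_prod_pow {s : ℕ} (m : Fin s → ℕ) (L : Fin s → MvPolynomial (Fin 2) ℂ)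
    (k : Fin 2) (γ : Fin s → ℂ) (hm : ∀ i, 1 ≤ m i) (hγ : ∀ i, pderiv k (L i) = C (γ i)) :
    pderiv k (∏ i, L i ^ m i) =
      (∏ i, L i ^ (m i - 1)) *
        ∑ i, C ((m i : ℂ) * γ i) * ∏ j ∈ univ.erase i, L j := by
  rw [stmt9_pderiv_finset_prod, Finset.mul_sum]
  apply Finset.sum_congr rfl
  intro i _
  rw [pderiv_pow, hγ]
  have h1 : ∀ j, L j ^ m j = L j ^ (m j - 1) * L j := by
    intro j; conv_lhs => rw [← Nat.sub_add_cancel (hm j)]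
    rw [pow_succ]
  calc (↑(m i) * L i ^ (m i - 1) * C (γ i)) * ∏ j ∈ univ.erase i, L j ^ m j
      = (↑(m i) * L i ^ (m i - 1) * C (γ i)) *
        ((∏ j ∈ univ.erase i, L j ^ (m j - 1)) * ∏ j ∈ univ.erase i, L j) := by
        rw [← Finset.prod_mul_distrib]; congr 1; exact Finset.prod_congr rfl fun j _ => h1 j
    _ = (L i ^ (m i - 1) * ∏ j ∈ univ.erase i, L j ^ (m j - 1)) *
        ((↑(m i) * C (γ i)) * ∏ j ∈ univ.erase i, L j) := by ring
    _ = (∏ j, L j ^ (m j - 1)) * (C ((m i : ℂ) * γ i) * ∏ j ∈ univ.erase i, L j) := by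
        rw [Finset.mul_prod_erase univ (fun j => L j ^ (m j - 1)) (Finset.mem_univ i), map_mul]
        norm_cast

/-- If `f = c·∏ᵢ (αᵢ x + βᵢ y)^{mᵢ}` is homogeneous of degree `m = ∑ mᵢ ≥ 2`
with `s` distinct linear factors, then `lcm(f_x, f_y)` is homogeneous of
degree `m + s - 2`. -/
theorem stmt_9 (s : ℕ) (hs : 0 < s) (m : Fin s → ℕ) (hm : ∀ i, 1 ≤ m i)
    (c : ℂ) (hc : c ≠ 0) (α β : Fin s → ℂ) (hnz : ∀ i, (α i, β i) ≠ 0)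
    (hdist : ∀ i j, i ≠ j → α i * β j ≠ α j * β i)
    (f : MvPolynomial (Fin 2) ℂ)
    (hf : f = C c * ∏ i, (C (α i) * X 0 + C (β i) * X 1) ^ m i)
    (hdeg : 2 ≤ ∑ i, m i) :
    ∃ L : MvPolynomial (Fin 2) ℂ,
      L.IsHomogeneous (∑ i, m i + s - 2) ∧
      pderiv 0 f ∣ L ∧ pderiv 1 f ∣ L ∧
      ∀ g : MvPolynomial (Fin 2) ℂ, pderiv 0 f ∣ g → pderiv 1 f ∣ g → L ∣ g := by
  set ℓ : Fin s → MvPolynomial (Fin 2) ℂ := fun i => C (α i) * X 0 + C (β i) * X 1 with hℓdef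
  set D : MvPolynomial (Fin 2) ℂ := ∏ i, ℓ i ^ (m i - 1) with hDdef
  set A : MvPolynomial (Fin 2) ℂ :=
    ∑ i, C ((m i : ℂ) * α i) * ∏ j ∈ univ.erase i, ℓ j with hAdef
  set B : MvPolynomial (Fin 2) ℂ :=
    ∑ i, C ((m i : ℂ) * β i) * ∏ j ∈ univ.erase i, ℓ j with hBdef
  have hprime : ∀ i, Prime (ℓ i) := fun i => stmt9_prime_lin (hnz i)
  have hℓ0 : ∀ i, ℓ i ≠ 0 := fun i => (hprime i).ne_zero
  have hd0 : ∀ i, pderiv (0 : Fin 2) (ℓ i) = C (α i) := by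
    intro i
    simp [hℓdef, pderiv_C_mul]
  have hd1 : ∀ i, pderiv (1 : Fin 2) (ℓ i) = C (β i) := by
    intro i
    simp [hℓdef, pderiv_C_mul]
  have hfx : pderiv (0 : Fin 2) f = (C c * D) * A := by
    rw [hf, pderiv_C_mul, stmt9_deriv_prod_pow m ℓ 0 α hm hd0, mul_assoc]
  have hfy : pderiv (1 : Fin 2) f = (C c * D) * B := by
    rw [hf, pderiv_C_mul, stmt9_deriv_prod_pow m ℓ 1 β hm hd1, mul_assoc]
  have hD0 : D ≠ 0 := by
    rw [hDdef]
    exact Finset.prod_ne_zero_iff.mpr fun i _ => pow_ne_zero _ (hℓ0 i)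
  have hcD : (C c * D : MvPolynomial (Fin 2) ℂ) ≠ 0 :=
    mul_ne_zero (fun h => hc (by simpa using (C_eq_zero.mp h))) hD0
  -- non-proportional linear forms do not divide each other
  have hnd : ∀ i j, i ≠ j → ¬ (ℓ i ∣ ℓ j) := by
    intro i j hij ⟨q, hq⟩
    apply hdist j i (Ne.symm hij)
    have := congrArg (eval (fun k : Fin 2 => if k = 0 then β i else - α i)) hq
    simp [hℓdef, mul_comm] at this ⊢
    linear_combination this
  -- if ℓ i divides A then α i = 0, similarly for B
  have hdvd_coord : ∀ (γ : Fin s → ℂ) (i : Fin s),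
      (ℓ i ∣ ∑ k, C ((m k : ℂ) * γ k) * ∏ j ∈ univ.erase k, ℓ j) → γ i = 0 := by
    intro γ i hdvd
    have hsplit : (∑ k, C ((m k : ℂ) * γ k) * ∏ j ∈ univ.erase k, ℓ j)
        = C ((m i : ℂ) * γ i) * (∏ j ∈ univ.erase i, ℓ j)
          + ∑ k ∈ univ.erase i, C ((m k : ℂ) * γ k) * ∏ j ∈ univ.erase k, ℓ j :=
      (Finset.add_sum_erase univ _ (Finset.mem_univ i)).symm
    have hrest : ℓ i ∣ ∑ k ∈ univ.erase i, C ((m k : ℂ) * γ k) * ∏ j ∈ univ.erase k, ℓ j := by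
      apply Finset.dvd_sum
      intro k hk
      exact Dvd.dvd.mul_left
        (Finset.dvd_prod_of_mem _ (Finset.mem_erase.mpr ⟨(Finset.mem_erase.mp hk).1.symm,
          Finset.mem_univ i⟩)) _
    have hterm : ℓ i ∣ C ((m i : ℂ) * γ i) * ∏ j ∈ univ.erase i, ℓ j := by
      have := (dvd_add_right hrest).mp (by rwa [hsplit, add_comm] at hdvd)
      exact this
    rcases (hprime i).dvd_mul.mp hterm with h | h
    · by_contra hγ
      have hu : IsUnit (C ((m i : ℂ) * γ i) : MvPolynomial (Fin 2) ℂ) := by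
        refine (isUnit_iff_ne_zero.mpr ?_).map C
        have hmi : m i ≠ 0 := by have := hm i; omega
        exact mul_ne_zero (Nat.cast_ne_zero.mpr hmi) hγ
      exact (hprime i).not_unit (isUnit_of_dvd_unit h hu)
    · obtain ⟨j, hj, hdvdj⟩ := (hprime i).dvd_finset_prod_iff _ |>.mp h
      exact absurd hdvdj (hnd i j (Finset.mem_erase.mp hj).1.symm)
  -- Euler-style identity
  have heuler : X 0 * A + X 1 * B = C ((∑ i, m i : ℕ) : ℂ) * ∏ i, ℓ i := by
    rw [hAdef, hBdef, Finset.mul_sum, Finset.mul_sum, ← Finset.sum_add_distrib]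
    have : ∀ i ∈ (univ : Finset (Fin s)),
        X 0 * (C ((m i : ℂ) * α i) * ∏ j ∈ univ.erase i, ℓ j)
          + X 1 * (C ((m i : ℂ) * β i) * ∏ j ∈ univ.erase i, ℓ j)
        = C ((m i : ℕ) : ℂ) * ∏ j, ℓ j := by
      intro i _
      rw [← Finset.mul_prod_erase univ ℓ (Finset.mem_univ i)]
      rw [hℓdef]
      simp only [map_mul]
      ring
    rw [Finset.sum_congr rfl this, ← Finset.sum_mul, ← map_sum]
    push_cast
    ring
  -- relative primality of A and B
  have hrel : A ≠ 0 → B ≠ 0 → IsRelPrime A B := by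
    intro hA0 hB0 d hdA hdB
    by_contra hdu
    have hd0' : d ≠ 0 := fun h => hA0 (by simpa [h] using hdA)
    obtain ⟨p, hpirr, hpd⟩ := WfDvdMonoid.exists_irreducible_factor hdu hd0'
    have hp : Prime p := (UniqueFactorizationMonoid.irreducible_iff_prime).mp hpirr
    have hpA : p ∣ A := hpd.trans hdA
    have hpB : p ∣ B := hpd.trans hdB
    have hpe : p ∣ C ((∑ i, m i : ℕ) : ℂ) * ∏ i, ℓ i := by
      rw [← heuler]
      exact dvd_add (hpA.mul_left _) (hpB.mul_left _)
    rcases hp.dvd_mul.mp hpe with h | h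
    · refine hp.not_unit (isUnit_of_dvd_unit h ?_)
      have hM : (∑ i, m i) ≠ 0 := by omega
      exact (isUnit_iff_ne_zero.mpr (Nat.cast_ne_zero.mpr hM)).map C
    · obtain ⟨i, -, hpi⟩ := hp.exists_mem_finset_dvd h
      have hli : ℓ i ∣ p := (hpirr.dvd_symm (hprime i).irreducible hpi)
      have hα : α i = 0 := hdvd_coord α i (by rw [← hAdef]; exact hli.trans hpA)
      have hβ : β i = 0 := hdvd_coord β i (by rw [← hBdef]; exact hli.trans hpB)
      exact hnz i (by simp [hα, hβ, Prod.ext_iff])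
  refine ⟨(C c * D) * (A * B), ?_, ?_, ?_, ?_⟩
  · -- homogeneity
    have hhl : ∀ i, (ℓ i).IsHomogeneous 1 := by
      intro i
      exact (isHomogeneous_C_mul_X (α i) 0).add (isHomogeneous_C_mul_X (β i) 1)
    have hhD : D.IsHomogeneous (∑ i, (m i - 1)) :=
      IsHomogeneous.prod _ _ _ fun i _ => by
        simpa only [one_mul] using (hhl i).pow (m i - 1)
    have hhsum : ∀ (γ : Fin s → ℂ),
        (∑ i, C ((m i : ℂ) * γ i) * ∏ j ∈ univ.erase i, ℓ j).IsHomogeneous (s - 1) := by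
      intro γ
      apply IsHomogeneous.sum
      intro i _
      have : (∏ j ∈ univ.erase i, ℓ j).IsHomogeneous (s - 1) := by
        have := IsHomogeneous.prod (univ.erase i) ℓ (fun _ => 1) fun j _ => hhl j
        simpa [Finset.card_erase_of_mem, Finset.card_univ] using this
      exact this.C_mul _
    have hhA : A.IsHomogeneous (s - 1) := hhsum α
    have hhB : B.IsHomogeneous (s - 1) := hhsum β
    have hgoal : ((C c * D) * (A * B)).IsHomogeneous
        ((∑ i, (m i - 1)) + ((s - 1) + (s - 1))) := by
      rw [mul_assoc]
      exact (hhD.mul (hhA.mul hhB)).C_mul c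
    have hsum : (∑ i, (m i - 1)) + s = ∑ i, m i := by
      have h1 : ∑ i, m i = ∑ i, ((m i - 1) + 1) :=
        Finset.sum_congr rfl fun i _ => by have := hm i; omega
      rw [h1, Finset.sum_add_distrib]
      simp [Finset.card_univ]
    have hdeg2 : (∑ i, (m i - 1)) + ((s - 1) + (s - 1)) = ∑ i, m i + s - 2 := by omega
    rw [← hdeg2]
    exact hgoal
  · rw [hfx]; exact mul_dvd_mul_left _ (Dvd.intro _ rfl)
  · rw [hfy]; exact mul_dvd_mul_left _ (Dvd.intro_left _ rfl)
  · intro g hg0 hg1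
    rw [hfx] at hg0
    rw [hfy] at hg1
    rcases eq_or_ne A 0 with hA | hA
    · rw [hA, mul_zero, zero_dvd_iff] at hg0
      simp [hg0]
    rcases eq_or_ne B 0 with hB | hB
    · rw [hB, mul_zero, zero_dvd_iff] at hg1
      simp [hg1]
    obtain ⟨u, hu⟩ := hg0
    have : (C c * D) * B ∣ (C c * D) * (A * u) := by rw [mul_assoc] at hu; rw [← hu]; exact hg1
    have hBu : B ∣ A * u := (mul_dvd_mul_iff_left hcD).mp this
    have hBu2 : B ∣ u := ((hrel hA hB).symm).dvd_of_dvd_mul_left hBu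
    obtain ⟨v, hv⟩ := hBu2
    exact ⟨v, by rw [hu, hv]; ring⟩
end

section
/- Let q be an integer with |q| ≥ 2 and let i, j ≥ 1, k ≥ 2 with k ≤ i + j. Define S^k_{i,j} = (q−1)^{k−2}·(q^{gcd(i,j)}−1) if k < i+j and S^k_{i,j} = (q−1)^{i+j−2}·(q^{gcd(i,j)}−1) if k = i+j. Then for k ≥ 3 with k ≤ i+j, and whenever i−1 ≥ 1 and j−1 ≥ 1, the recursion S^k_{i,j} = ±gcd(S^{k−1}_{i−1,j}·(q^j−1), S^{k−1}_{i,j−1}·(q^i−1)) holds. -/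
open Finset

private lemma gcd_addmul (a b c : ℤ) : Int.gcd a (b + a * c) = Int.gcd a b := by
  apply Nat.dvd_antisymm <;> rw [← Int.natCast_dvd_natCast]
  · refine Int.dvd_coe_gcd (Int.gcd_dvd_left _ _) ?_
    have ha : (↑(Int.gcd a (b + a * c)) : ℤ) ∣ a := Int.gcd_dvd_left _ _
    have hb : (↑(Int.gcd a (b + a * c)) : ℤ) ∣ b + a * c := Int.gcd_dvd_right _ _
    simpa using hb.sub (ha.mul_right c)
  · refine Int.dvd_coe_gcd (Int.gcd_dvd_left _ _) ?_
    have ha : (↑(Int.gcd a b) : ℤ) ∣ a := Int.gcd_dvd_left _ _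
    have hb : (↑(Int.gcd a b) : ℤ) ∣ b := Int.gcd_dvd_right _ _
    exact hb.add (ha.mul_right c)

private lemma gcd_pow_sub_one (q : ℤ) (a b : ℕ) :
    Int.gcd (q ^ a - 1) (q ^ b - 1) = (q ^ Nat.gcd a b - 1).natAbs := by
  induction a, b using Nat.gcd.induction with
  | H0 n => simp
  | H1 m n hm ih =>
    rw [Nat.gcd_rec, ← ih]
    obtain ⟨c, hc⟩ : (q ^ m - 1) ∣ (q ^ (m * (n / m)) - 1) := by
      simpa [pow_mul] using sub_dvd_pow_sub_pow (q ^ m) 1 (n / m)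
    have hn : m * (n / m) + n % m = n := Nat.div_add_mod n m
    have h2 : q ^ n = q ^ (m * (n / m)) * q ^ (n % m) := by rw [← pow_add, hn]
    have key : q ^ n - 1 = (q ^ (n % m) - 1) + (q ^ m - 1) * (c * q ^ (n % m)) := by
      linear_combination h2 + q ^ (n % m) * hc
    rw [key, gcd_addmul, Int.gcd_comm]

private lemma fact_pow (q : ℤ) (s a : ℕ) (hs : s ∣ a) :
    q ^ a - 1 = (q ^ s - 1) * ∑ m ∈ Finset.range (a / s), (q ^ s) ^ m := by
  rw [mul_geom_sum, ← pow_mul, Nat.mul_div_cancel' hs]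

private lemma mod_geom (q : ℤ) (s n : ℕ) :
    (q ^ s - 1) ∣ ((∑ m ∈ Finset.range n, (q ^ s) ^ m) - (n : ℤ)) := by
  have h : (∑ m ∈ Finset.range n, (q ^ s) ^ m) - (n : ℤ)
      = ∑ m ∈ Finset.range n, ((q ^ s) ^ m - 1) := by
    rw [Finset.sum_sub_distrib, Finset.sum_const, Finset.card_range]
    simp
  rw [h]
  exact Finset.dvd_sum fun m _ => by simpa using sub_dvd_pow_sub_pow (q ^ s) 1 m

private lemma key_coprime (q : ℤ) (s a t b : ℕ) (hs : s ∣ a) (ht : t ∣ b)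
    (h1 : Nat.gcd a b ∣ s) (h2 : Nat.gcd a b ∣ t)
    (hcop : Nat.Coprime (a / s) (b / t)) :
    IsCoprime (∑ m ∈ Finset.range (a / s), (q ^ s) ^ m)
      (∑ m ∈ Finset.range (b / t), (q ^ t) ^ m) := by
  rw [Int.isCoprime_iff_gcd_eq_one]
  set U := ∑ m ∈ Finset.range (a / s), (q ^ s) ^ m with hU
  set V := ∑ m ∈ Finset.range (b / t), (q ^ t) ^ m with hV
  set d := Int.gcd U V with hd
  have hdU : (d : ℤ) ∣ U := Int.gcd_dvd_left _ _
  have hdV : (d : ℤ) ∣ V := Int.gcd_dvd_right _ _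
  have hUa : U ∣ q ^ a - 1 := ⟨q ^ s - 1, by rw [fact_pow q s a hs]; ring⟩
  have hVb : V ∣ q ^ b - 1 := ⟨q ^ t - 1, by rw [fact_pow q t b ht]; ring⟩
  have h3 : (d : ℤ) ∣ q ^ a - 1 := hdU.trans hUa
  have h4 : (d : ℤ) ∣ q ^ b - 1 := hdV.trans hVb
  have h5 : (d : ℤ) ∣ q ^ Nat.gcd a b - 1 := by
    have h := Int.dvd_coe_gcd h3 h4
    rw [gcd_pow_sub_one] at h
    exact Int.dvd_natAbs.mp h
  have hdiv : ∀ (u : ℕ), Nat.gcd a b ∣ u → (d : ℤ) ∣ q ^ u - 1 := by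
    intro u hu
    obtain ⟨c, hc⟩ := hu
    refine h5.trans ?_
    rw [hc, pow_mul]
    simpa using sub_dvd_pow_sub_pow (q ^ Nat.gcd a b) 1 c
  have h7 : (d : ℤ) ∣ ((a / s : ℕ) : ℤ) := by
    have hm : (d : ℤ) ∣ U - ((a / s : ℕ) : ℤ) := (hdiv s h1).trans (mod_geom q s (a / s))
    simpa using hdU.sub hm
  have h8 : (d : ℤ) ∣ ((b / t : ℕ) : ℤ) := by
    have hm : (d : ℤ) ∣ V - ((b / t : ℕ) : ℤ) := (hdiv t h2).trans (mod_geom q t (b / t))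
    simpa using hdV.sub hm
  have hfin : d ∣ Nat.gcd (a / s) (b / t) :=
    Nat.dvd_gcd (Int.natCast_dvd_natCast.mp h7) (Int.natCast_dvd_natCast.mp h8)
  rw [show Nat.gcd (a / s) (b / t) = 1 from hcop] at hfin
  exact Nat.dvd_one.mp hfin

private lemma main_gcd (q : ℤ) (i j : ℕ) (hi : 2 ≤ i) (hj : 2 ≤ j) :
    Int.gcd ((q ^ Nat.gcd (i - 1) j - 1) * (q ^ j - 1))
        ((q ^ Nat.gcd i (j - 1) - 1) * (q ^ i - 1))
      = ((q - 1) * (q ^ Nat.gcd i j - 1)).natAbs := by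
  set g := Nat.gcd i j with hg
  set g1 := Nat.gcd (i - 1) j with hg1
  set g2 := Nat.gcd i (j - 1) with hg2
  have hgi : g ∣ i := Nat.gcd_dvd_left i j
  have hgj : g ∣ j := Nat.gcd_dvd_right i j
  have hgpos : 0 < g := Nat.gcd_pos_of_pos_left j (by omega)
  -- coprimality facts on indices
  have hg1i : Nat.gcd g1 i = 1 := by
    have h1 : Nat.gcd g1 i ∣ i - 1 := (Nat.gcd_dvd_left g1 i).trans (Nat.gcd_dvd_left (i - 1) j)
    have h2 : Nat.gcd g1 i ∣ i := Nat.gcd_dvd_right g1 i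
    have h3 : Nat.gcd g1 i ∣ i - (i - 1) := Nat.dvd_sub h2 h1
    have h4 : i - (i - 1) = 1 := by omega
    rw [h4] at h3; exact Nat.dvd_one.mp h3
  have hg2j : Nat.gcd g2 j = 1 := by
    have h1 : Nat.gcd g2 j ∣ j - 1 := (Nat.gcd_dvd_left g2 j).trans (Nat.gcd_dvd_right i (j - 1))
    have h2 : Nat.gcd g2 j ∣ j := Nat.gcd_dvd_right g2 j
    have h3 : Nat.gcd g2 j ∣ j - (j - 1) := Nat.dvd_sub h2 h1
    have h4 : j - (j - 1) = 1 := by omega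
    rw [h4] at h3; exact Nat.dvd_one.mp h3
  have hg1g2 : Nat.gcd g1 g2 = 1 := by
    have h1 : Nat.gcd g1 g2 ∣ i - 1 := (Nat.gcd_dvd_left g1 g2).trans (Nat.gcd_dvd_left (i - 1) j)
    have h2 : Nat.gcd g1 g2 ∣ i := (Nat.gcd_dvd_right g1 g2).trans (Nat.gcd_dvd_left i (j - 1))
    have h3 : Nat.gcd g1 g2 ∣ i - (i - 1) := Nat.dvd_sub h2 h1
    have h4 : i - (i - 1) = 1 := by omega
    rw [h4] at h3; exact Nat.dvd_one.mp h3
  have higdvd : i / g ∣ i := ⟨g, (Nat.div_mul_cancel hgi).symm⟩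
  have hjgdvd : j / g ∣ j := ⟨g, (Nat.div_mul_cancel hgj).symm⟩
  -- the four coprimality facts for the geometric-sum cofactors
  have C1 : IsCoprime (∑ m ∈ Finset.range (g1 / 1), (q ^ 1) ^ m)
      (∑ m ∈ Finset.range (g2 / 1), (q ^ 1) ^ m) := by
    refine key_coprime q 1 g1 1 g2 (one_dvd _) (one_dvd _) ?_ ?_ ?_
    · rw [hg1g2]
    · rw [hg1g2]
    · simpa [Nat.div_one] using hg1g2
  have C2 : IsCoprime (∑ m ∈ Finset.range (g1 / 1), (q ^ 1) ^ m)
      (∑ m ∈ Finset.range (i / g), (q ^ g) ^ m) := by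
    refine key_coprime q 1 g1 g i (one_dvd _) hgi ?_ ?_ ?_
    · simp [hg1i]
    · simp [hg1i]
    · have : Nat.Coprime g1 i := hg1i
      simpa [Nat.div_one] using this.coprime_dvd_right higdvd
  have C3 : IsCoprime (∑ m ∈ Finset.range (j / g), (q ^ g) ^ m)
      (∑ m ∈ Finset.range (g2 / 1), (q ^ 1) ^ m) := by
    refine key_coprime q g j 1 g2 hgj (one_dvd _) ?_ ?_ ?_
    · simp [Nat.gcd_comm j g2, hg2j]
    · simp [Nat.gcd_comm j g2, hg2j]
    · have : Nat.Coprime g2 j := hg2j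
      simpa [Nat.div_one] using (this.coprime_dvd_right hjgdvd).symm
  have C4 : IsCoprime (∑ m ∈ Finset.range (j / g), (q ^ g) ^ m)
      (∑ m ∈ Finset.range (i / g), (q ^ g) ^ m) := by
    refine key_coprime q g j g i hgj hgi ?_ ?_ ?_
    · rw [Nat.gcd_comm j i, ← hg]
    · rw [Nat.gcd_comm j i, ← hg]
    · have := Nat.coprime_div_gcd_div_gcd (m := i) (n := j) (by rwa [← hg])
      exact this.symm
  have Ccomb : IsCoprime
      ((∑ m ∈ Finset.range (g1 / 1), (q ^ 1) ^ m) * ∑ m ∈ Finset.range (j / g), (q ^ g) ^ m)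
      ((∑ m ∈ Finset.range (g2 / 1), (q ^ 1) ^ m) * ∑ m ∈ Finset.range (i / g), (q ^ g) ^ m) :=
    IsCoprime.mul_left (C1.mul_right C2) (C3.mul_right C4)
  have E1 : (q ^ g1 - 1) * (q ^ j - 1)
      = ((q - 1) * (q ^ g - 1)) *
        ((∑ m ∈ Finset.range (g1 / 1), (q ^ 1) ^ m) * ∑ m ∈ Finset.range (j / g), (q ^ g) ^ m) := by
    rw [fact_pow q 1 g1 (one_dvd _), fact_pow q g j hgj]; ring
  have E2 : (q ^ g2 - 1) * (q ^ i - 1)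
      = ((q - 1) * (q ^ g - 1)) *
        ((∑ m ∈ Finset.range (g2 / 1), (q ^ 1) ^ m) * ∑ m ∈ Finset.range (i / g), (q ^ g) ^ m) := by
    rw [fact_pow q 1 g2 (one_dvd _), fact_pow q g i hgi]; ring
  rw [E1, E2, Int.gcd_mul_left, Int.isCoprime_iff_gcd_eq_one.mp Ccomb, mul_one]

/-- The closed form for the generators `S^k_{i,j}` of `L_k[i,j]` in
`ℤ⟨x,y⟩/(yx - qxy)`. -/
noncomputable def Sgen (q : ℤ) (k i j : ℕ) : ℤ :=
  if k < i + j then (q - 1) ^ (k - 2) * (q ^ (Nat.gcd i j) - 1)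
  else (q - 1) ^ (i + j - 2) * (q ^ (Nat.gcd i j) - 1)

/-- The closed form `S^k_{i,j}` satisfies the gcd recursion, up to sign. -/
theorem stmt_19 (q : ℤ) (hq : 2 ≤ |q|) (k i j : ℕ) (hi : 2 ≤ i) (hj : 2 ≤ j)
    (hk : 3 ≤ k) (hk' : k ≤ i + j) :
    (Sgen q k i j).natAbs =
      Int.gcd (Sgen q (k - 1) (i - 1) j * (q ^ j - 1))
        (Sgen q (k - 1) i (j - 1) * (q ^ i - 1)) := by
  have hL : Sgen q k i j = (q - 1) ^ (k - 2) * (q ^ (Nat.gcd i j) - 1) := by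
    unfold Sgen; split_ifs with h
    · rfl
    · have hkij : i + j - 2 = k - 2 := by omega
      rw [hkij]
  have hR1 : Sgen q (k - 1) (i - 1) j = (q - 1) ^ (k - 3) * (q ^ (Nat.gcd (i - 1) j) - 1) := by
    unfold Sgen; split_ifs with h
    · have : k - 1 - 2 = k - 3 := by omega
      rw [this]
    · have : i - 1 + j - 2 = k - 3 := by omega
      rw [this]
  have hR2 : Sgen q (k - 1) i (j - 1) = (q - 1) ^ (k - 3) * (q ^ (Nat.gcd i (j - 1)) - 1) := by
    unfold Sgen; split_ifs with h
    · have : k - 1 - 2 = k - 3 := by omega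
      rw [this]
    · have : i + (j - 1) - 2 = k - 3 := by omega
      rw [this]
  rw [hL, hR1, hR2, mul_assoc, mul_assoc, Int.gcd_mul_left, main_gcd q i j hi hj]
  have hpow : (q - 1) ^ (k - 2) = (q - 1) ^ (k - 3) * (q - 1) := by
    rw [← pow_succ]
    congr 1
    omega
  rw [hpow, mul_assoc, Int.natAbs_mul, Int.natAbs_pow, Int.natAbs_mul]
end
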